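/- arXiv:2210.02170 — 8 statements merged into one kernel-verified Lean document; each statement's English description precedes it below -/
import Mathlib

section
/- Let X be a separable metrizable topological space with more than one point, and let S be a ubiquitously dense subset of X. Put κ = card(S). Then there exists a family {A(α)}_{α<κ} of subsets of X, indexed by the cardinal κ, such that: (1) each A(α) is countable; (2) each A(α) is dense in X; (3) A(α) ∩ A(β) = ∅ whenever α ≠ β; and (4) S = ⋃_{α<κ} A(α). -/
/-- A subset `S` of a topological space `X` is ubiquitously dense if every nonempty
open subset `U` of `X` satisfies `card (U ∩ S) = card S`. -/
def UbiquitouslyDense {X : Type} [TopologicalSpace X] (S : Set X) : Prop :=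
  ∀ U : Set X, IsOpen U → U.Nonempty → Cardinal.mk ↥(U ∩ S) = Cardinal.mk ↥S

open Set Cardinal

noncomputable section UbiqAux

/-- `pickOne T U` is a canonical choice of a singleton subset of `T \ U` when the
latter is nonempty, and `∅` otherwise. -/
def pickOne {X : Type} (T U : Set X) : Set X :=
  {x | ∃ h : (T \ U).Nonempty, x = h.choose}

lemma pickOne_subset {X : Type} (T U : Set X) : pickOne T U ⊆ T \ U := by
  rintro x ⟨h, rfl⟩
  exact h.choose_spec

lemma pickOne_subsingleton {X : Type} (T U : Set X) : (pickOne T U).Subsingleton := by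
  rintro x ⟨h, rfl⟩ y ⟨h', rfl⟩
  rfl

lemma pickOne_nonempty {X : Type} {T U : Set X} (h : (T \ U).Nonempty) :
    (pickOne T U).Nonempty := ⟨h.choose, h, rfl⟩

variable {X J : Type} [LinearOrder J] [WellFoundedLT J]

/-- The union of the values of `g` at steps before `t`. -/
def gprev (t : J) (g : J → Set X) : Set X :=
  ⋃ s : {s : J // s < t}, g s.1

/-- Transfinite greedy choice: at step `t`, pick one point of the candidate set `c t`
avoiding all previously chosen points. -/
def gfun (c : J → Set X) : J → Set X :=
  (wellFounded_lt (α := J)).fix fun t rec =>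
    pickOne (c t) (⋃ s : {s : J // s < t}, rec s.1 s.2)

lemma gfun_eq (c : J → Set X) (t : J) :
    gfun c t = pickOne (c t) (gprev t (gfun c)) := by
  rw [gfun, WellFounded.fix_eq]
  rfl

lemma gfun_subset (c : J → Set X) (t : J) :
    gfun c t ⊆ c t \ gprev t (gfun c) := by
  rw [gfun_eq]; exact pickOne_subset _ _

lemma gfun_subsingleton (c : J → Set X) (t : J) : (gfun c t).Subsingleton := by
  rw [gfun_eq]; exact pickOne_subsingleton _ _

lemma gfun_disjoint (c : J → Set X) {s t : J} (h : s < t) :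
    Disjoint (gfun c s) (gfun c t) := by
  rw [Set.disjoint_right]
  intro x hxt hxs
  have h1 : x ∈ gprev t (gfun c) := mem_iUnion.2 ⟨⟨s, h⟩, hxs⟩
  exact (gfun_subset c t hxt).2 h1

lemma gfun_disjoint_of_ne (c : J → Set X) {s t : J} (h : s ≠ t) :
    Disjoint (gfun c s) (gfun c t) := by
  rcases h.lt_or_gt with h' | h'
  · exact gfun_disjoint c h'
  · exact (gfun_disjoint c h').symm

lemma mk_gprev_le (c : J → Set X) (t : J) :
    #(gprev t (gfun c)) ≤ #{s : J // s < t} := by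
  calc #(gprev t (gfun c)) ≤ Cardinal.sum fun s : {s : J // s < t} => #(gfun c s.1) :=
        mk_iUnion_le_sum_mk
    _ ≤ Cardinal.sum fun _ : {s : J // s < t} => 1 :=
        Cardinal.sum_le_sum _ _ fun s => (gfun_subsingleton c s.1).cardinalMk_le_one
    _ = #{s : J // s < t} := by rw [Cardinal.sum_const', mul_one]

lemma gfun_nonempty (c : J → Set X) (t : J)
    (h : #(gprev t (gfun c)) < #(c t)) : (gfun c t).Nonempty := by
  rw [gfun_eq]
  apply pickOne_nonempty
  rw [nonempty_iff_ne_empty]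
  intro he
  rw [diff_eq_empty] at he
  exact absurd (Cardinal.mk_le_mk_of_subset he) h.not_ge

end UbiqAux

/-- If `X` is a separable metrizable space with more than one point and
`S` is a ubiquitously dense subset of `X`, then `S` decomposes into a family, indexed by
a set of cardinality `card S`, of pairwise disjoint countable dense subsets of `X`. -/
theorem stmt1 {X : Type} [TopologicalSpace X] [TopologicalSpace.MetrizableSpace X]
    [TopologicalSpace.SeparableSpace X]
    (hX : 1 < Cardinal.mk X) (S : Set X) (hS : UbiquitouslyDense S) :
    ∃ (I : Type) (A : I → Set X),
      Cardinal.mk I = Cardinal.mk ↥S ∧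
      (∀ α, (A α).Countable) ∧
      (∀ α, Dense (A α)) ∧
      (∀ α β, α ≠ β → A α ∩ A β = ∅) ∧
      S = ⋃ α, A α := by
  classical
  rcases S.eq_empty_or_nonempty with hSe | hSne
  · -- trivial case: `S = ∅`
    subst hSe
    haveI : IsEmpty (↥(∅ : Set X)) := by simp
    refine ⟨↥(∅ : Set X), fun _ => ∅, rfl, fun α => isEmptyElim α, fun α => isEmptyElim α,
      fun α => isEmptyElim α, ?_⟩
    rw [Set.iUnion_of_empty]
  -- main case
  haveI : Nontrivial X := Cardinal.one_lt_iff_nontrivial.mp hX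
  letI : MetricSpace X := TopologicalSpace.metrizableSpaceMetric X
  haveI : SecondCountableTopology X := UniformSpace.secondCountable_of_separable X
  obtain ⟨ℬ, hBc, hBne, hBbasis⟩ := TopologicalSpace.exists_countable_basis X
  -- the basis is nonempty
  have hBnemp : ℬ.Nonempty := by
    rcases (univ_nonempty : (Set.univ : Set X).Nonempty) with ⟨x, -⟩
    have : x ∈ ⋃₀ ℬ := by rw [hBbasis.sUnion_eq]; trivial
    rcases this with ⟨B, hB, -⟩
    exact ⟨B, hB⟩
  obtain ⟨b, hb⟩ := hBc.exists_eq_range hBnemp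
  have hbB : ∀ n, b n ∈ ℬ := fun n => hb ▸ mem_range_self n
  have hbopen : ∀ n, IsOpen (b n) := fun n => hBbasis.isOpen (hbB n)
  have hbne : ∀ n, (b n).Nonempty := fun n => by
    rw [nonempty_iff_ne_empty]
    intro h
    exact hBne (h ▸ hbB n)
  -- `S` is infinite
  obtain ⟨x, y, hxy⟩ := exists_pair_ne X
  obtain ⟨U, V, hU, hV, hxU, hyV, hUV⟩ := t2_separation hxy
  have h1 : #(↥(U ∩ S)) = #(↥S) := hS U hU ⟨x, hxU⟩
  have h2 : #(↥(V ∩ S)) = #(↥S) := hS V hV ⟨y, hyV⟩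
  have hdisj : Disjoint (U ∩ S) (V ∩ S) :=
    hUV.mono inter_subset_left inter_subset_left
  have hsub : #(↥((U ∩ S) ∪ (V ∩ S))) ≤ #(↥S) :=
    Cardinal.mk_le_mk_of_subset (union_subset inter_subset_right inter_subset_right)
  rw [Cardinal.mk_union_of_disjoint hdisj, h1, h2] at hsub
  have hS0 : #(↥S) ≠ 0 := by
    rw [Cardinal.mk_ne_zero_iff, nonempty_coe_sort]
    exact hSne
  have hκ : ℵ₀ ≤ #(↥S) := by
    by_contra h
    push_neg at h
    obtain ⟨n, hn⟩ := Cardinal.lt_aleph0.mp h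
    rw [hn] at hsub hS0
    have hn' : n + n ≤ n := by exact_mod_cast hsub
    have hn0 : n ≠ 0 := by exact_mod_cast hS0
    omega
  -- an index type of cardinality `#S`, well-ordered so that initial segments are small
  set κ : Cardinal := #(↥S) with hκdef
  have hcardK : #(κ.ord.ToType) = #(↥S × (ℕ ⊕ Unit)) := by
    rw [Cardinal.mk_ord_toType]
    have h3 : #(ℕ ⊕ Unit) = ℵ₀ := by simp
    rw [Cardinal.mk_prod, h3, Cardinal.lift_id, Cardinal.lift_id,
      Cardinal.mul_aleph0_eq hκ]
  set K := κ.ord.ToType with hK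
  have e : K ≃ (↥S × (ℕ ⊕ Unit)) := (Cardinal.eq.mp hcardK).some
  -- the candidate sets
  set c : K → Set X := fun k =>
    Sum.elim (fun n => b n ∩ S) (fun _ => {((e k).1 : X)}) (e k).2 with hc
  have hcinl : ∀ k n, (e k).2 = Sum.inl n → c k = b n ∩ S := by
    intro k n h
    simp only [hc]
    rw [h, Sum.elim_inl]
  have hcinr : ∀ k, (e k).2 = Sum.inr () → c k = {((e k).1 : X)} := by
    intro k h
    simp only [hc]
    rw [h, Sum.elim_inr]
  have hcS : ∀ k, c k ⊆ S := by
    intro k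
    rcases h : (e k).2 with n | ⟨⟩
    · rw [hcinl k n h]
      exact inter_subset_right
    · rw [hcinr k h]
      rw [singleton_subset_iff]
      exact (e k).1.2
  have hprev : ∀ k : K, #(gprev k (gfun c)) < κ := by
    intro k
    exact (mk_gprev_le c k).trans_lt (Cardinal.mk_Iio_ord_toType k)
  have hinl : ∀ (k : K) (n : ℕ), (e k).2 = Sum.inl n →
      (gfun c k).Nonempty ∧ gfun c k ⊆ b n ∩ S := by
    intro k n h
    have hck : c k = b n ∩ S := hcinl k n h
    have hcard : #(c k) = κ := by rw [hck]; exact hS (b n) (hbopen n) (hbne n)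
    refine ⟨gfun_nonempty c k ?_, fun z hz => hck ▸ (gfun_subset c k hz).1⟩
    rw [hcard]
    exact hprev k
  -- the family
  set A : ↥S → Set X := fun i => ⋃ z : ℕ ⊕ Unit, gfun c (e.symm (i, z)) with hA
  refine ⟨↥S, A, rfl, ?_, ?_, ?_, ?_⟩
  · -- countable
    intro α
    exact countable_iUnion fun z => (gfun_subsingleton c _).countable
  · -- dense
    intro α
    rw [dense_iff_inter_open]
    intro U' hU' hU'ne
    obtain ⟨x', hx'⟩ := hU'ne
    obtain ⟨v, hvB, hx'v, hvU'⟩ := hBbasis.exists_subset_of_mem_open hx' hU'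
    rw [hb] at hvB
    obtain ⟨n, rfl⟩ := hvB
    have h2 : (e (e.symm (α, Sum.inl n))).2 = Sum.inl n := by
      rw [e.apply_symm_apply]
    obtain ⟨hne', hsub'⟩ := hinl _ n h2
    obtain ⟨z, hz⟩ := hne'
    exact ⟨z, hvU' (hsub' hz).1, mem_iUnion.2 ⟨Sum.inl n, hz⟩⟩
  · -- pairwise disjoint
    intro α β hab
    rw [eq_empty_iff_forall_notMem]
    rintro z ⟨hz1, hz2⟩
    obtain ⟨z1, hz1⟩ := mem_iUnion.1 hz1
    obtain ⟨z2, hz2⟩ := mem_iUnion.1 hz2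
    have hkne : e.symm (α, z1) ≠ e.symm (β, z2) := by
      intro h
      exact hab (congrArg Prod.fst (e.symm.injective h))
    exact Set.disjoint_left.mp (gfun_disjoint_of_ne c hkne) hz1 hz2
  · -- union is `S`
    apply Subset.antisymm
    · intro s hs
      set i : ↥S := ⟨s, hs⟩ with hi
      set k : K := e.symm (i, Sum.inr ()) with hk
      have h2 : (e k).2 = Sum.inr () := by rw [hk, e.apply_symm_apply]
      have hck : c k = {s} := by
        rw [hcinr k h2, hk, e.apply_symm_apply]
      by_cases hmem : s ∈ gprev k (gfun c)
      · obtain ⟨⟨s', hs'⟩, hmem'⟩ := mem_iUnion.1 hmem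
        refine mem_iUnion.2 ⟨(e s').1, mem_iUnion.2 ⟨(e s').2, ?_⟩⟩
        simp only [Prod.mk.eta, Equiv.symm_apply_apply]
        exact hmem'
      · have hne' : (c k \ gprev k (gfun c)).Nonempty := by
          refine ⟨s, ?_, hmem⟩
          rw [hck]; rfl
        have : (gfun c k).Nonempty := by
          rw [gfun_eq]; exact pickOne_nonempty hne'
        obtain ⟨z, hz⟩ := this
        have hzs : z = s := by
          have := (gfun_subset c k hz).1
          rwa [hck, mem_singleton_iff] at this
        exact mem_iUnion.2 ⟨i, mem_iUnion.2 ⟨Sum.inr (), hzs ▸ hz⟩⟩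
    · refine iUnion_subset fun i => iUnion_subset fun z => ?_
      exact fun x hx => hcS _ (gfun_subset c _ hx).1
end

section
/- Let S be a ubiquitously dense subset of [0,∞) with 0 ∈ S, and put κ = card(S). Let X be a discrete topological space with card(X) ≤ κ, let d be a metric on X inducing its (discrete) topology, and let ε > 0. Then there exists a metric e on X inducing the topology of X, taking all its values in S, such that: (1) sup_{x,y∈X} |d(x,y) − e(x,y)| ≤ ε; (2) e is uniformly discrete; (3) e(x,y) < e(x,z) + e(z,y) for all pairwise distinct x, y, z ∈ X; and (4) e is strongly rigid. -/
/-- Injective choice: if each target set has cardinality at least that of the index type,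
we can pick distinct representatives. -/
lemma exists_inj_choice {ι : Type} (T : ι → Set ℝ)
    (h : ∀ i, Cardinal.mk ι ≤ Cardinal.mk (T i)) :
    ∃ F : ι → ℝ, (∀ i, F i ∈ T i) ∧ Function.Injective F := by
  classical
  obtain ⟨eqv⟩ : Nonempty ((Cardinal.mk ι).ord.ToType ≃ ι) := by
    rw [← Cardinal.eq, Cardinal.mk_ord_toType]
  set β := (Cardinal.mk ι).ord.ToType with hβ
  have key : ∀ (x : β) (g : ∀ y : β, y < x → ℝ),
      (T (eqv x) \ Set.range (fun y : Set.Iio x => g y.1 y.2)).Nonempty := by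
    intro x g
    rw [Set.diff_nonempty]
    intro hsub
    have h1 := Cardinal.mk_le_mk_of_subset hsub
    have h2 : Cardinal.mk (Set.range fun y : Set.Iio x => g y.1 y.2)
        ≤ Cardinal.mk (Set.Iio x) := Cardinal.mk_range_le
    have h3 : Cardinal.mk (Set.Iio x) < Cardinal.mk ι := Cardinal.mk_Iio_ord_toType x
    exact absurd h3 ((h (eqv x)).trans (h1.trans h2)).not_gt
  let G : β → ℝ := IsWellFounded.fix (· < ·) (fun x g => (key x g).some)
  have hG : ∀ x : β, G x ∈ T (eqv x) \ Set.range (fun y : Set.Iio x => G y.1) := by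
    intro x
    have hfix := IsWellFounded.fix_eq (α := β) (· < ·) (fun x g => (key x g).some) x
    rw [show G x = (key x (fun y _ => G y)).some from hfix]
    exact (key x (fun y _ => G y)).some_mem
  have Ginj : Function.Injective G := by
    intro x y hxy
    by_contra hne
    rcases lt_trichotomy x y with hlt | heq | hlt
    · exact (hG y).2 ⟨⟨x, hlt⟩, hxy⟩
    · exact hne heq
    · exact (hG x).2 ⟨⟨y, hlt⟩, hxy.symm⟩
  refine ⟨fun i => G (eqv.symm i), fun i => ?_, fun a b hab => eqv.symm.injective (Ginj hab)⟩
  have := (hG (eqv.symm i)).1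
  rwa [eqv.apply_symm_apply] at this

/-- A metric on `X` (as a distance function) that induces the topology of `X`. -/
structure MetricOn (X : Type*) [TopologicalSpace X] where
  toFun : X → X → ℝ
  symm : ∀ x y, toFun x y = toFun y x
  refl : ∀ x, toFun x x = 0
  eq_of : ∀ x y, toFun x y = 0 → x = y
  triangle : ∀ x y z, toFun x z ≤ toFun x y + toFun y z
  isOpen_iff : ∀ s : Set X, IsOpen s ↔ ∀ x ∈ s, ∃ ε > 0, ∀ y, toFun x y < ε → y ∈ s

/-- A metric is strongly rigid if `d(x,y) = d(u,v) ≠ 0` implies `{x,y} = {u,v}`. -/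
def StronglyRigid {X : Type*} [TopologicalSpace X] (d : MetricOn X) : Prop :=
  ∀ x y u v : X, d.toFun x y = d.toFun u v → d.toFun x y ≠ 0 →
    ({x, y} : Set X) = ({u, v} : Set X)

/-- A subset `S` of `[0,∞)` is ubiquitously dense (in `[0,∞)`) if every nonempty open
subset `U` of the subspace `[0,∞)` satisfies `card (U ∩ S) = card S`. -/
def UbiqDenseIci (S : Set ℝ) : Prop :=
  ∀ U : Set ℝ, IsOpen U → (U ∩ Set.Ici 0).Nonempty →
    Cardinal.mk ↥(U ∩ Set.Ici 0 ∩ S) = Cardinal.mk ↥S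

/-- Approximation of a metric on a discrete space by a strongly rigid,
uniformly discrete metric with values in a prescribed ubiquitously dense subset `S` of
`[0,∞)` and with strict triangle inequality. -/
theorem stmt2 (S : Set ℝ) (hS0 : S ⊆ Set.Ici 0) (h0S : (0:ℝ) ∈ S)
    (hS : UbiqDenseIci S)
    {X : Type} [TopologicalSpace X] [DiscreteTopology X]
    (hcard : Cardinal.mk X ≤ Cardinal.mk ↥S)
    (d : MetricOn X) (ε : ℝ) (hε : 0 < ε) :
    ∃ e : MetricOn X,
      (∀ x y, e.toFun x y ∈ S) ∧
      (∀ x y, |d.toFun x y - e.toFun x y| ≤ ε) ∧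
      (∃ c > 0, ∀ x y, x ≠ y → c < e.toFun x y) ∧
      (∀ x y z : X, x ≠ y → y ≠ z → x ≠ z →
        e.toFun x y < e.toFun x z + e.toFun z y) ∧
      StronglyRigid e := by
  classical
  -- `S` is infinite
  have hSne : Cardinal.mk S ≠ 0 := Cardinal.mk_ne_zero_iff.mpr ⟨⟨0, h0S⟩⟩
  have hSinf : S.Infinite := by
    by_contra hfin
    rw [Set.not_infinite] at hfin
    have hop : IsOpen (Set.Ioo (1:ℝ) 2 ∩ Sᶜ) :=
      isOpen_Ioo.inter hfin.isClosed.isOpen_compl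
    have hne : ((Set.Ioo (1:ℝ) 2 ∩ Sᶜ) ∩ Set.Ici 0).Nonempty := by
      obtain ⟨t, ht⟩ := ((Set.Ioo_infinite (by norm_num : (1:ℝ) < 2)).diff hfin).nonempty
      exact ⟨t, ⟨⟨ht.1, ht.2⟩, le_of_lt (lt_trans one_pos ht.1.1)⟩⟩
    have h1 := hS _ hop hne
    have h2 : ((Set.Ioo (1:ℝ) 2 ∩ Sᶜ) ∩ Set.Ici 0 ∩ S) = ∅ := by
      ext t; simp only [Set.mem_inter_iff, Set.mem_compl_iff, Set.mem_empty_iff_false,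
        iff_false]
      rintro ⟨⟨⟨-, h⟩, -⟩, hmem⟩; exact h hmem
    rw [h2] at h1
    exact hSne (h1.symm.trans (by simp))
  have hκinf : Cardinal.aleph0 ≤ Cardinal.mk S :=
    Cardinal.infinite_iff.mp (Set.infinite_coe_iff.mpr hSinf)
  -- a well-order on X
  letI : LinearOrder X := IsWellOrder.linearOrder WellOrderingRel
  -- the index type of pairs
  let P := {p : X × X // p.1 < p.2}
  have hP : Cardinal.mk P ≤ Cardinal.mk S := by
    calc Cardinal.mk P ≤ Cardinal.mk (X × X) := Cardinal.mk_subtype_le _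
    _ = Cardinal.mk X * Cardinal.mk X := by rw [Cardinal.mk_prod]; simp
    _ ≤ Cardinal.mk S * Cardinal.mk S := mul_le_mul' hcard hcard
    _ = Cardinal.mk S := Cardinal.mul_eq_self hκinf
  -- target sets
  let T : P → Set ℝ := fun p =>
    Set.Ioo (max (d.toFun p.1.1 p.1.2) (ε/3) + ε/3) (max (d.toFun p.1.1 p.1.2) (ε/3) + ε/3 + ε/3)
      ∩ Set.Ici 0 ∩ S
  have hT : ∀ p, Cardinal.mk (T p) = Cardinal.mk S := by
    intro p
    apply hS _ isOpen_Ioo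
    refine ⟨max (d.toFun p.1.1 p.1.2) (ε/3) + ε/3 + ε/6, ⟨?_, ?_⟩, ?_⟩
    · linarith
    · linarith
    · have := le_max_right (d.toFun p.1.1 p.1.2) (ε/3)
      simp only [Set.mem_Ici]; linarith
  obtain ⟨F, hFmem, hFinj⟩ := exists_inj_choice T (fun p => le_of_le_of_eq hP (hT p).symm)
  -- the pair of x and y
  let q : ∀ x y : X, x ≠ y → P := fun x y h => ⟨(min x y, max x y), min_lt_max.mpr h⟩
  have qsymm : ∀ x y (h : x ≠ y), q x y h = q y x h.symm := by
    intro x y h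
    apply Subtype.ext
    simp only [q, Prod.mk.injEq]
    exact ⟨min_comm x y, max_comm x y⟩
  have dq : ∀ x y (h : x ≠ y), d.toFun (q x y h).1.1 (q x y h).1.2 = d.toFun x y := by
    intro x y h
    rcases le_total x y with hxy | hxy
    · simp only [q, min_eq_left hxy, max_eq_right hxy]
    · simp only [q, min_eq_right hxy, max_eq_left hxy]
      exact (d.symm x y).symm
  -- nonnegativity of d
  have dnn : ∀ x y, 0 ≤ d.toFun x y := by
    intro x y
    have h1 := d.triangle x y x
    have h2 := d.refl x
    have h3 := d.symm x y
    linarith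
  -- the new distance function
  let E : X → X → ℝ := fun x y => if h : x = y then 0 else F (q x y h)
  have Eeq : ∀ x, E x x = 0 := fun x => dif_pos rfl
  have Ene : ∀ x y (h : x ≠ y), E x y = F (q x y h) := fun x y h => dif_neg h
  have hFS : ∀ x y (h : x ≠ y), E x y ∈ S := by
    intro x y h; rw [Ene x y h]; exact (hFmem (q x y h)).2
  have hlo : ∀ x y (h : x ≠ y), max (d.toFun x y) (ε/3) + ε/3 < E x y := by
    intro x y h
    have := (hFmem (q x y h)).1.1.1
    rw [dq x y h] at this
    rw [Ene x y h]; exact this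
  have hhi : ∀ x y (h : x ≠ y), E x y < max (d.toFun x y) (ε/3) + ε/3 + ε/3 := by
    intro x y h
    have := (hFmem (q x y h)).1.1.2
    rw [dq x y h] at this
    rw [Ene x y h]; exact this
  have Epos : ∀ x y (h : x ≠ y), ε/3 + ε/3 < E x y := by
    intro x y h
    have h1 := hlo x y h
    have h2 := le_max_right (d.toFun x y) (ε/3)
    linarith
  have Enn : ∀ x y, 0 ≤ E x y := by
    intro x y
    by_cases h : x = y
    · subst h; rw [Eeq]
    · have := Epos x y h; linarith
  have Esymm : ∀ x y, E x y = E y x := by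
    intro x y
    by_cases h : x = y
    · subst h; rfl
    · rw [Ene x y h, Ene y x (Ne.symm h), qsymm x y h]
  -- strict triangle inequality for distinct points
  have Estrict : ∀ x y z : X, x ≠ y → y ≠ z → x ≠ z →
      E x y < E x z + E z y := by
    intro x y z hxy hyz hxz
    have h1 := hhi x y hxy
    have h2 := hlo x z hxz
    have h3 := hlo z y (Ne.symm hyz)
    have h4 := d.triangle x z y
    have h5 : max (d.toFun x y) (ε/3) ≤
        max (d.toFun x z) (ε/3) + max (d.toFun z y) (ε/3) := by
      have a1 := le_max_left (d.toFun x z) (ε/3)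
      have a2 := le_max_left (d.toFun z y) (ε/3)
      have a3 := le_max_right (d.toFun x z) (ε/3)
      have a4 := le_max_right (d.toFun z y) (ε/3)
      have a5 := dnn z y
      apply max_le <;> linarith
    linarith
  -- triangle for all points
  have Etri : ∀ x y z, E x z ≤ E x y + E y z := by
    intro x y z
    by_cases hxz : x = z
    · rw [hxz, Eeq z]; exact add_nonneg (Enn z y) (Enn y z)
    by_cases hxy : x = y
    · rw [hxy, Eeq y, zero_add]
    by_cases hyz : y = z
    · rw [hyz, Eeq z, add_zero]
    · exact le_of_lt (Estrict x z y hxz (fun h => hyz h.symm) hxy)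
  refine ⟨⟨E, Esymm, Eeq, ?_, Etri, ?_⟩, ?_, ?_, ?_, ?_, ?_⟩
  · -- eq_of
    intro x y h
    by_contra hne
    have := Epos x y hne
    rw [h] at this
    linarith
  · -- isOpen_iff
    intro s
    constructor
    · intro _ x hx
      refine ⟨ε/3, by linarith, fun y hy => ?_⟩
      by_contra hne
      have := Epos x y (fun h => hne (h ▸ hx))
      linarith
    · intro _; exact isOpen_discrete s
  · -- values in S
    intro x y
    show E x y ∈ S
    by_cases h : x = y
    · subst h; rw [Eeq]; exact h0S
    · exact hFS x y h
  · -- approximation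
    intro x y
    show |d.toFun x y - E x y| ≤ ε
    by_cases h : x = y
    · subst h; rw [Eeq, d.refl]; simp; linarith
    · have h1 := hlo x y h
      have h2 := hhi x y h
      have h3 := dnn x y
      have h4 := le_max_left (d.toFun x y) (ε/3)
      have h5 : max (d.toFun x y) (ε/3) ≤ d.toFun x y + ε/3 :=
        max_le (by linarith) (by linarith)
      rw [abs_le]
      constructor <;> linarith
  · -- uniform discreteness
    refine ⟨ε/2, by linarith, fun x y h => ?_⟩
    show ε/2 < E x y
    have := Epos x y h; linarith
  · -- strict triangle
    exact Estrict
  · -- strong rigidity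
    intro x y u v heq hne
    replace heq : E x y = E u v := heq
    replace hne : E x y ≠ 0 := hne
    have hxy : x ≠ y := by
      intro h; subst h; rw [Eeq] at hne; exact hne rfl
    have huv : u ≠ v := by
      intro h; subst h; rw [Eeq] at heq; exact hne heq
    rw [Ene x y hxy, Ene u v huv] at heq
    have hq := hFinj heq
    have hpair : ∀ a b : X, ({a, b} : Set X) = {min a b, max a b} := by
      intro a b
      rcases le_total a b with hab | hab
      · rw [min_eq_left hab, max_eq_right hab]
      · rw [min_eq_right hab, max_eq_left hab, Set.pair_comm]
    have h1 : (min x y, max x y) = (min u v, max u v) := congrArg Subtype.val hq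
    rw [hpair x y, hpair u v, (Prod.mk.injEq _ _ _ _).mp h1 |>.1,
      (Prod.mk.injEq _ _ _ _).mp h1 |>.2]
end

section
/- Let F : ℕ → ℕ be strictly increasing with F(n+1) − F(n) → ∞ and Σ_{m=n+1}^{∞} 2^{F(n)−F(m)} → 0 as n → ∞. Define λᵢ = 2^{−F(i)}. Let Q : ℕ → ℚ≥0 be a bijection, and for a subset B of ℚ≥0 define ⟨λ, B⟩ = Σ_{i : Q(i) ∈ B} λᵢ (and ⟨λ, ∅⟩ = 0). Let k ∈ ℕ, let P₀, …, P_k be subsets of ℚ≥0, and let S ⊆ ℚ≥0. Assume there exist real numbers a, b₀, …, b_k ∈ [0,∞) such that: (I) a < bᵢ for all i ∈ {0,…,k}; (II) bᵢ ≠ b_j whenever i ≠ j; and (III) S ∩ Pᵢ = [a, bᵢ) ∩ ℚ≥0 for all i ∈ {0,…,k}. Then the (k+2) real numbers ⟨λ, P₀⟩, …, ⟨λ, P_k⟩, and 1 are linearly independent over ℚ. -/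
/-!
Write `d m = ∑ i, c i · [Q m ∈ P i]`, so that a rational relation says `∑ m, d m 2^{-F m}` is
rational; after clearing denominators, `d` is integer valued, bounded, and the sum is an integer
`w`. Then `2^{F n}` times the `n`-th tail equals `2^{F n} w` minus an integer, and is bounded by a
constant times `∑_{m > n} 2^{F n - F m} → 0`, so every late tail vanishes and `d m = 0` for large
`m`. Every interval `(L, b i)` contains nonnegative rationals of arbitrarily large index; taking
`L` above `a` and above every `b j < b i`, such a rational lies in `P j` iff `b i ≤ b j`, so
`∑_{b i ≤ b j} c j = 0` for every `i`, which forces `c = 0` as the `b i` are distinct.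
-/

open Filter Topology

section Tails

variable {α : Type*} [AddCommGroup α] [TopologicalSpace α] [IsTopologicalAddGroup α] [T2Space α]
  {f : ℕ → α}

lemma sum_range_succ_add_tsum_Ioi (hf : Summable f) (n : ℕ) :
    ∑ m ∈ Finset.range (n + 1), f m + ∑' m : {m : ℕ // n < m}, f m = ∑' m, f m := by
  have hcompl : ((Finset.range (n + 1) : Set ℕ)ᶜ) = {m | n < m} := by ext m; simp
  rw [← hf.sum_add_tsum_compl (s := Finset.range (n + 1)), hcompl]
  rfl

lemma tsum_Ioi_eq_add_tsum_Ioi_succ (hf : Summable f) (n : ℕ) :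
    ∑' m : {m : ℕ // n < m}, f m = f (n + 1) + ∑' m : {m : ℕ // n + 1 < m}, f m := by
  have h := sum_range_succ_add_tsum_Ioi hf n
  rw [← sum_range_succ_add_tsum_Ioi hf (n + 1), Finset.sum_range_succ _ (n + 1), add_assoc] at h
  exact add_left_cancel h

end Tails

lemma abs_tsum_mul_le {ι : Type*} {w d : ι → ℝ} (hw : Summable w) (hw0 : ∀ i, 0 ≤ w i) {D : ℝ}
    (hd : ∀ i, |d i| ≤ D) : |∑' i, d i * w i| ≤ D * ∑' i, w i :=
  tsum_of_norm_bounded (f := fun i => d i * w i) (hw.hasSum.mul_left D) fun i => by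
    rw [Real.norm_eq_abs, abs_mul, abs_of_nonneg (hw0 i)]
    exact mul_le_mul_of_nonneg_right (hd i) (hw0 i)

section Lacunary

variable {F : ℕ → ℕ}

lemma summable_two_zpow_neg_of_strictMono (hF : StrictMono F) :
    Summable fun m => (2 : ℝ) ^ (-(F m : ℤ)) := by
  refine summable_geometric_two.of_nonneg_of_le (fun m => by positivity) fun m => ?_
  rw [one_div, inv_pow, ← zpow_natCast, ← zpow_neg]
  exact zpow_le_zpow_right₀ one_le_two (by simpa using hF.le_apply)

lemma exists_int_eq_two_zpow_mul_sum (hF : Monotone F) (z : ℕ → ℤ) (n : ℕ) :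
    ∃ y : ℤ,
      (2 : ℝ) ^ (F n : ℤ) * ∑ m ∈ Finset.range (n + 1), (z m : ℝ) * 2 ^ (-(F m : ℤ)) = y := by
  refine ⟨∑ m ∈ Finset.range (n + 1), z m * 2 ^ (F n - F m), ?_⟩
  rw [Finset.mul_sum]
  push_cast
  refine Finset.sum_congr rfl fun m hm => ?_
  have hmn : F m ≤ F n := hF (Finset.mem_range_succ_iff.1 hm)
  rw [← zpow_natCast, Nat.cast_sub hmn, sub_eq_add_neg, zpow_add₀ two_ne_zero]
  ring


lemma eventually_eq_zero_of_tsum_eq_int (hF : StrictMono F)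
    (hsum : Tendsto (fun n => ∑' m : {m : ℕ // n < m}, (2 : ℝ) ^ ((F n : ℤ) - (F m : ℤ)))
      atTop (𝓝 0))
    {z : ℕ → ℤ} {D : ℝ} (hD : ∀ m, |(z m : ℝ)| ≤ D) {w : ℤ}
    (hzw : ∑' m, (z m : ℝ) * 2 ^ (-(F m : ℤ)) = w) : ∀ᶠ m in atTop, z m = 0 := by
  set f : ℕ → ℝ := fun m => (z m : ℝ) * 2 ^ (-(F m : ℤ)) with hfdef
  have hw := summable_two_zpow_neg_of_strictMono hF
  have hf : Summable f := (hw.mul_left D).of_norm_bounded fun m => by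
    show |(z m : ℝ) * 2 ^ (-(F m : ℤ))| ≤ D * 2 ^ (-(F m : ℤ))
    have hpos : (0 : ℝ) < 2 ^ (-(F m : ℤ)) := zpow_pos two_pos _
    rw [abs_mul, abs_of_pos hpos]
    exact mul_le_mul_of_nonneg_right (hD m) hpos.le
  have htail : ∀ᶠ n in atTop, ∑' m : {m : ℕ // n < m}, f m = 0 := by
    filter_upwards [(hsum.const_mul D).eventually_lt_const (by simp : D * 0 < 1)] with n hn
    obtain ⟨y, hy⟩ := exists_int_eq_two_zpow_mul_sum hF.monotone z n
    have hscaled :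
        (2 : ℝ) ^ (F n : ℤ) * ∑' m : {m : ℕ // n < m}, f m = (w * 2 ^ F n - y : ℤ) := by
      push_cast
      rw [← zpow_natCast, ← hy, ← hzw, ← sum_range_succ_add_tsum_Ioi hf n]
      ring
    have hbound : |(2 : ℝ) ^ (F n : ℤ) * ∑' m : {m : ℕ // n < m}, f m| < 1 := by
      have hshift : ∀ m : ℕ, (2 : ℝ) ^ (F n : ℤ) * 2 ^ (-(F m : ℤ)) = 2 ^ ((F n : ℤ) - F m) :=
        fun m => by rw [← zpow_add₀ two_ne_zero, sub_eq_add_neg]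
      have hws : Summable fun m : {m : ℕ // n < m} => (2 : ℝ) ^ ((F n : ℤ) - F m) := by
        have h := (hw.mul_left ((2 : ℝ) ^ (F n : ℤ))).subtype {m | n < m}
        simp only [Function.comp_def, hshift] at h
        exact h
      refine lt_of_le_of_lt ?_ hn
      rw [← tsum_mul_left]
      simpa only [hfdef, mul_left_comm _ (z _ : ℝ), hshift] using
        abs_tsum_mul_le hws (fun _ => by positivity) (fun m => hD m)
    rw [hscaled, ← Int.cast_abs, ← Int.cast_one, Int.cast_lt, Int.abs_lt_one_iff] at hbound
    rw [hbound, Int.cast_zero, mul_eq_zero] at hscaled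
    exact hscaled.resolve_left (by positivity)
  obtain ⟨N, hN⟩ := eventually_atTop.1 htail
  refine eventually_atTop.2 ⟨N + 1, fun m hm => ?_⟩
  obtain ⟨n, rfl⟩ : ∃ n, m = n + 1 := ⟨m - 1, by omega⟩
  have h := tsum_Ioi_eq_add_tsum_Ioi_succ hf n
  rw [hN n (by omega), hN (n + 1) (by omega), add_zero] at h
  exact_mod_cast (mul_eq_zero.1 h.symm).resolve_right (zpow_pos two_pos _).ne'

end Lacunary

lemma exists_nnrat_btwn {x y : ℝ} (hx : 0 ≤ x) (hxy : x < y) :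
    ∃ q : ℚ≥0, x < q ∧ (q : ℝ) < y := by
  obtain ⟨r, hxr, hry⟩ := exists_rat_btwn hxy
  have hr : 0 ≤ r := by exact_mod_cast hx.trans hxr.le
  refine ⟨r.toNNRat, ?_, ?_⟩ <;> rwa [← Rat.cast_nnratCast, Rat.coe_toNNRat r hr]

lemma frequently_atTop_of_eventually_nhdsLT (Q : ℕ ≃ ℚ≥0) {y : ℝ} (hy : 0 < y) {p : ℝ → Prop}
    (hp : ∀ᶠ r in 𝓝[<] y, p r) : ∃ᶠ m in atTop, p (Q m) := by
  obtain ⟨l, hl, hlp⟩ := mem_nhdsLT_iff_exists_Ioo_subset.1 hp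
  obtain ⟨r₁, hlr₁, hr₁y⟩ := exists_nnrat_btwn (le_max_right l 0) (max_lt hl hy)
  obtain ⟨r₂, hr₁r₂, hr₂y⟩ := exists_nnrat_btwn r₁.cast_nonneg hr₁y
  have hinf : (Q ⁻¹' Set.Ioo r₁ r₂).Infinite :=
    (Set.Ioo_infinite (by exact_mod_cast hr₁r₂)).preimage (by simp [Q.range_eq_univ])
  refine Nat.frequently_atTop_iff_infinite.2 (hinf.mono ?_)
  rintro m ⟨h₁, h₂⟩
  refine hlp ⟨?_, ?_⟩
  · exact (le_max_left l 0).trans_lt (hlr₁.trans (by exact_mod_cast h₁))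
  · exact (show ((Q m : ℚ≥0) : ℝ) < r₂ by exact_mod_cast h₂).trans hr₂y

lemma eventually_nhdsLT_forall_lt_iff_le {ι α : Type*} [Finite ι] [LinearOrder α]
    [TopologicalSpace α] [OrderTopology α] (b : ι → α) (y : α) :
    ∀ᶠ r in 𝓝[<] y, ∀ j, r < b j ↔ y ≤ b j := by
  refine eventually_all.2 fun j => ?_
  rcases le_or_gt y (b j) with h | h
  · filter_upwards [self_mem_nhdsWithin] with r (hr : r < y)
    exact iff_of_true (hr.trans_le h) h
  · filter_upwards [Ioo_mem_nhdsLT h] with r hr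
    exact iff_of_false (not_lt.2 hr.1.le) (not_le.2 h)

lemma eq_zero_of_forall_sum_filter_le_eq_zero {ι α M : Type*} [Fintype ι] [LinearOrder α]
    [AddCommGroup M] {b : ι → α} (hb : Function.Injective b) {c : ι → M}
    (hc : ∀ i, ∑ j with b i ≤ b j, c j = 0) (i : ι) : c i = 0 := by
  classical
  have hsplit : ∑ j with b i ≤ b j, c j = c i + ∑ j with b i < b j, c j := by
    rw [← Finset.sum_insert (by simp)]
    congr 1
    ext j
    simp [le_iff_lt_or_eq, hb.eq_iff, eq_comm, or_comm]
  have hgt : ∑ j with b i < b j, c j = 0 := by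
    rcases (Finset.univ.filter (b i < b ·)).eq_empty_or_nonempty with h | h
    · rw [h, Finset.sum_empty]
    · obtain ⟨i', hi', hmin⟩ := Finset.exists_min_image _ b h
      rw [← hc i']
      congr 1
      ext j
      simp only [Finset.mem_filter, Finset.mem_univ, true_and] at hi' hmin ⊢
      exact ⟨fun h => hmin j h, fun h => hi'.trans_le h⟩
  simpa [hsplit, hgt] using hc i

lemma mem_iff_lt_of_inter_eq {ι : Type*} {P : ι → Set ℚ≥0} {S : Set ℚ≥0} {a : ℝ} {b : ι → ℝ}
    (hSP : ∀ i, S ∩ P i = {q : ℚ≥0 | a ≤ (q : ℝ) ∧ (q : ℝ) < b i}) {i : ι} {q : ℚ≥0}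
    (hqa : a ≤ q) (hqb : (q : ℝ) < b i) (j : ι) : q ∈ P j ↔ (q : ℝ) < b j := by
  have h : ∀ j, q ∈ S ∧ q ∈ P j ↔ a ≤ (q : ℝ) ∧ (q : ℝ) < b j := fun j => Set.ext_iff.1 (hSP j) q
  have hS : q ∈ S := ((h i).2 ⟨hqa, hqb⟩).1
  exact ⟨fun hq => ((h j).1 ⟨hS, hq⟩).2, fun hq => ((h j).2 ⟨hqa, hq⟩).2⟩

lemma sum_mul_tsum_subtype_eq_tsum {ι β : Type*} [Fintype ι] {w : β → ℝ} (hw : Summable w)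
    (s : ι → Set β) (c : ι → ℝ) :
    ∑ i, c i * ∑' m : s i, w m = ∑' m, ∑ i, c i * (s i).indicator w m := by
  rw [Summable.tsum_finsetSum fun i _ => (hw.indicator _).mul_left (c i)]
  simp_rw [tsum_mul_left, tsum_subtype]

lemma exists_pos_nat_mul_eq_int {ι : Type*} [Fintype ι] (c : ι → ℚ) :
    ∃ q : ℕ, 0 < q ∧ ∀ i, ∃ z : ℤ, (z : ℚ) = q * c i := by
  refine ⟨∏ i, (c i).den, Finset.prod_pos fun i _ => (c i).pos, fun i => ?_⟩
  obtain ⟨n, hn⟩ := Finset.dvd_prod_of_mem (fun i => (c i).den) (Finset.mem_univ i)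
  refine ⟨n * (c i).num, ?_⟩
  rw [hn]
  push_cast
  rw [← Rat.mul_den_eq_num]
  ring

theorem coeff_eq_zero_of_sum_mul_tsum_eq_int {ι : Type*} [Fintype ι] {F : ℕ → ℕ}
    (hF : StrictMono F)
    (hsum : Tendsto (fun n => ∑' m : {m : ℕ // n < m}, (2 : ℝ) ^ ((F n : ℤ) - (F m : ℤ)))
      atTop (𝓝 0))
    (Q : ℕ ≃ ℚ≥0) {P : ι → Set ℚ≥0} {S : Set ℚ≥0} {a : ℝ} {b : ι → ℝ} (ha : 0 ≤ a)
    (hab : ∀ i, a < b i) (hb : Function.Injective b)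
    (hSP : ∀ i, S ∩ P i = {q : ℚ≥0 | a ≤ (q : ℝ) ∧ (q : ℝ) < b i}) {e : ι → ℤ} {w : ℤ}
    (he : ∑ i, (e i : ℝ) * ∑' m : {m : ℕ // Q m ∈ P i}, (2 : ℝ) ^ (-(F m : ℤ)) = w) (i : ι) :
    e i = 0 := by
  classical
  set z : ℕ → ℤ := fun m => ∑ j, if Q m ∈ P j then e j else 0 with hz
  have hzero : ∀ᶠ m in atTop, z m = 0 := by
    refine eventually_eq_zero_of_tsum_eq_int hF hsum (D := ∑ j, |(e j : ℝ)|) (w := w)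
      (fun m => ?_) ?_
    · rw [hz]
      push_cast
      exact (Finset.abs_sum_le_sum_abs _ _).trans
        (Finset.sum_le_sum fun j _ => by split_ifs <;> simp)
    · rw [← he]
      refine ((sum_mul_tsum_subtype_eq_tsum (summable_two_zpow_neg_of_strictMono hF)
        (fun j => {m | Q m ∈ P j}) _).trans (tsum_congr fun m => ?_)).symm
      rw [hz]
      push_cast
      simp only [Set.indicator_apply, Set.mem_ofPred_eq, mul_ite, mul_zero, Finset.sum_mul, ite_mul,
        zero_mul]
  refine eq_zero_of_forall_sum_filter_le_eq_zero hb (fun l => ?_) i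
  obtain ⟨m, ⟨hQb, hQa⟩, hzm⟩ := ((frequently_atTop_of_eventually_nhdsLT Q (ha.trans_lt (hab l))
    ((eventually_nhdsLT_forall_lt_iff_le b (b l)).and (Ioo_mem_nhdsLT (hab l)))).and_eventually
      hzero).exists
  rw [← hzm, Finset.sum_filter]
  refine Finset.sum_congr rfl fun j _ => ?_
  simp only [mem_iff_lt_of_inter_eq hSP hQa.1.le hQa.2, hQb j]

theorem stmt3_general (F : ℕ → ℕ) (hmono : StrictMono F)
    (hsum : Filter.Tendsto
      (fun n => ∑' m : {m : ℕ // n < m}, (2 : ℝ) ^ ((F n : ℤ) - (F (m : ℕ) : ℤ)))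
      Filter.atTop (nhds 0))
    (Q : ℕ ≃ NNRat) (k : ℕ) (P : Fin (k + 1) → Set NNRat) (S : Set NNRat)
    (a : ℝ) (b : Fin (k + 1) → ℝ) (ha : 0 ≤ a)
    (hab : ∀ i, a < b i)
    (hbinj : ∀ i j, i ≠ j → b i ≠ b j)
    (hSP : ∀ i, S ∩ P i = {q : NNRat | a ≤ (q : ℝ) ∧ (q : ℝ) < b i}) :
    ∀ (c : Fin (k + 1) → ℚ) (c' : ℚ),
      (∑ i, (c i : ℝ) * ∑' m : {m : ℕ // Q m ∈ P i}, (2 : ℝ) ^ (-(F (m : ℕ) : ℤ)))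
        + (c' : ℝ) * 1 = 0 →
      (∀ i, c i = 0) ∧ c' = 0 := by
  intro c c' hrel
  obtain ⟨q, hq, hint⟩ := exists_pos_nat_mul_eq_int fun o : Option (Fin (k + 1)) => o.elim c' c
  choose z hz using hint
  have hzR : ∀ o, (z o : ℝ) = q * (o.elim c' c : ℚ) := fun o => by exact_mod_cast hz o
  have hzc : ∀ i, z (some i) = 0 :=
    coeff_eq_zero_of_sum_mul_tsum_eq_int hmono hsum Q ha hab
      (fun i j h => by_contra fun hne => hbinj i j hne h) hSP (w := -z none) (by
        simp only [hzR, Option.elim, Int.cast_neg, mul_assoc, ← Finset.mul_sum]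
        linear_combination (q : ℝ) * hrel)
  have hc : ∀ i, c i = 0 := fun i => by
    simpa [hzc i, hq.ne'] using (hz (some i)).symm
  exact ⟨hc, by simpa [hc] using hrel⟩

/-- Linear independence over `ℚ` of the numbers `⟨λ, P₀⟩, …, ⟨λ, P_k⟩, 1`,
where `λ i = 2^{-F i}` and `⟨λ, B⟩ = Σ_{i : Q i ∈ B} λ i`. -/
theorem stmt3 (F : ℕ → ℕ) (hmono : StrictMono F)
    (hgap : Filter.Tendsto (fun n => F (n + 1) - F n) Filter.atTop Filter.atTop)
    (hsum : Filter.Tendsto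
      (fun n => ∑' m : {m : ℕ // n < m}, (2 : ℝ) ^ ((F n : ℤ) - (F (m : ℕ) : ℤ)))
      Filter.atTop (nhds 0))
    (Q : ℕ ≃ NNRat) (k : ℕ) (P : Fin (k + 1) → Set NNRat) (S : Set NNRat)
    (a : ℝ) (b : Fin (k + 1) → ℝ) (ha : 0 ≤ a) (hb : ∀ i, 0 ≤ b i)
    (hab : ∀ i, a < b i)
    (hbinj : ∀ i j, i ≠ j → b i ≠ b j)
    (hSP : ∀ i, S ∩ P i = {q : NNRat | a ≤ (q : ℝ) ∧ (q : ℝ) < b i}) :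
    ∀ (c : Fin (k + 1) → ℚ) (c' : ℚ),
      (∑ i, (c i : ℝ) * ∑' m : {m : ℕ // Q m ∈ P i}, (2 : ℝ) ^ (-(F (m : ℕ) : ℤ)))
        + (c' : ℝ) * 1 = 0 →
      (∀ i, c i = 0) ∧ c' = 0 :=
  stmt3_general F hmono hsum Q k P S a b ha hab hbinj hSP
end

section
/- Let f : ℕ → ℕ be an injective map and define λᵢ = 2^{−f(i)}. Fix a bijection Q : ℕ → ℚ≥0, and for a subset B of ℚ≥0 define ⟨λ, B⟩ = Σ_{i : Q(i) ∈ B} λᵢ (and ⟨λ, ∅⟩ = 0). Let S and T be subsets of ℚ≥0, each of which is either infinite or empty. If ⟨λ, S⟩ = ⟨λ, T⟩, then S = T. -/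
open Set

/-- The geometric weight `2^{-n}`. -/
noncomputable def gg : ℕ → ℝ := fun n => ((2:ℝ)⁻¹)^n

private lemma gg_nonneg (n : ℕ) : 0 ≤ gg n := by unfold gg; positivity

private lemma gg_summable : Summable gg :=
  summable_geometric_of_lt_one (by norm_num) (by norm_num)

private lemma ind_summable (A : Set ℕ) : Summable (A.indicator gg) :=
  Summable.of_nonneg_of_le (fun n => Set.indicator_nonneg (fun n _ => gg_nonneg n) n)
    (fun n => Set.indicator_le_self' (fun n _ => gg_nonneg n) n) gg_summable

/-- Core lemma: strict comparison at the least point of difference. -/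
private lemma key (A B : Set ℕ) (hA : A.Infinite) (m : ℕ) (hmA : m ∈ A) (hmB : m ∉ B)
    (hpre : ∀ k < m, (k ∈ A ↔ k ∈ B)) :
    ∑' n : B, gg (n:ℕ) < ∑' n : A, gg (n:ℕ) := by
  have sA : Summable (A.indicator gg) := ind_summable A
  have sB : Summable (B.indicator gg) := ind_summable B
  have sA' : Summable (fun n : ℕ => A.indicator gg (n + (m+1))) :=
    (summable_nat_add_iff (m+1)).mpr sA
  have sB' : Summable (fun n : ℕ => B.indicator gg (n + (m+1))) :=
    (summable_nat_add_iff (m+1)).mpr sB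
  have sg' : Summable (fun n : ℕ => gg (n + (m+1))) :=
    (summable_nat_add_iff (m+1)).mpr gg_summable
  rw [tsum_subtype A gg, tsum_subtype B gg]
  rw [← Summable.sum_add_tsum_nat_add (m+1) sA, ← Summable.sum_add_tsum_nat_add (m+1) sB]
  have hprefix : ∀ k ∈ Finset.range m, A.indicator gg k = B.indicator gg k := by
    intro k hk
    have hiff := hpre k (Finset.mem_range.mp hk)
    by_cases h : k ∈ A
    · rw [Set.indicator_of_mem h, Set.indicator_of_mem (hiff.mp h)]
    · rw [Set.indicator_of_notMem h, Set.indicator_of_notMem (fun hb => h (hiff.mpr hb))]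
  have hsumA : ∑ i ∈ Finset.range (m+1), A.indicator gg i
      = ∑ i ∈ Finset.range m, A.indicator gg i + gg m := by
    rw [Finset.sum_range_succ, Set.indicator_of_mem hmA]
  have hsumB : ∑ i ∈ Finset.range (m+1), B.indicator gg i
      = ∑ i ∈ Finset.range m, B.indicator gg i := by
    rw [Finset.sum_range_succ, Set.indicator_of_notMem hmB, add_zero]
  -- tail bound for B
  have htailB : ∑' n : ℕ, B.indicator gg (n + (m+1)) ≤ gg m := by
    have h1 : ∑' n : ℕ, B.indicator gg (n + (m+1)) ≤ ∑' n : ℕ, gg (n + (m+1)) :=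
      Summable.tsum_le_tsum (fun n => Set.indicator_le_self' (fun n _ => gg_nonneg n) _) sB' sg'
    have h2 : ∑' n : ℕ, gg (n + (m+1)) = gg m := by
      have he : ∀ n : ℕ, gg (n + (m+1)) = gg (m+1) * ((2:ℝ)⁻¹)^n := by
        intro n; unfold gg; ring
      rw [tsum_congr he, tsum_mul_left,
        tsum_geometric_of_lt_one (by norm_num) (by norm_num)]
      unfold gg; norm_num; ring
    linarith
  -- tail of A is positive
  have htailA : 0 < ∑' n : ℕ, A.indicator gg (n + (m+1)) := by
    obtain ⟨a, haA, ham⟩ := hA.exists_gt m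
    have ha' : a - (m+1) + (m+1) = a := Nat.sub_add_cancel ham
    have hterm : 0 < A.indicator gg (a - (m+1) + (m+1)) := by
      rw [ha', Set.indicator_of_mem haA]; unfold gg; positivity
    have hle : A.indicator gg (a - (m+1) + (m+1)) ≤ ∑' n : ℕ, A.indicator gg (n + (m+1)) :=
      Summable.le_tsum sA' (a - (m+1)) (fun j _ => Set.indicator_nonneg (fun n _ => gg_nonneg n) _)
    linarith
  rw [hsumA, hsumB, Finset.sum_congr rfl hprefix]
  linarith

/-- Sums of `2^{-n}` over infinite-or-empty subsets of `ℕ` determine the set. -/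
private lemma key2 (A B : Set ℕ) (hA : A.Infinite ∨ A = ∅) (hB : B.Infinite ∨ B = ∅)
    (h : ∑' n : A, gg (n:ℕ) = ∑' n : B, gg (n:ℕ)) : A = B := by
  by_contra hne
  have hsd : (symmDiff A B).Nonempty := by
    rw [Set.nonempty_iff_ne_empty, Ne, symmDiff_eq_empty]
    exact hne
  obtain ⟨x, hx⟩ := hsd
  have hex : ∃ n, n ∈ symmDiff A B := ⟨x, hx⟩
  classical
  have hm : Nat.find hex ∈ symmDiff A B := Nat.find_spec hex
  set m := Nat.find hex with hmdef
  have hpre : ∀ k < m, (k ∈ A ↔ k ∈ B) := by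
    intro k hk
    have hnot : k ∉ symmDiff A B := Nat.find_min hex hk
    rw [Set.mem_symmDiff] at hnot
    push_neg at hnot
    exact ⟨hnot.1, hnot.2⟩
  rw [Set.mem_symmDiff] at hm
  rcases hm with ⟨hmA, hmB⟩ | ⟨hmB, hmA⟩
  · have hAinf : A.Infinite := hA.resolve_right (fun he => by simp [he] at hmA)
    exact absurd h (ne_of_gt (key A B hAinf m hmA hmB hpre))
  · have hBinf : B.Infinite := hB.resolve_right (fun he => by simp [he] at hmB)
    exact absurd h.symm (ne_of_gt (key B A hBinf m hmB hmA (fun k hk => (hpre k hk).symm)))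

/-- If `f : ℕ → ℕ` is injective, `λ i = 2^{-f i}`, `Q : ℕ ≃ ℚ≥0` is a
bijection, and `S`, `T` are subsets of `ℚ≥0` each infinite or empty, then
`⟨λ, S⟩ = ⟨λ, T⟩` implies `S = T`. -/
theorem stmt4 (f : ℕ → ℕ) (hf : Function.Injective f) (Q : ℕ ≃ NNRat)
    (S T : Set NNRat)
    (hS : S.Infinite ∨ S = ∅) (hT : T.Infinite ∨ T = ∅)
    (h : ∑' i : {i : ℕ // Q i ∈ S}, (2 : ℝ) ^ (-(f (i : ℕ) : ℤ))
       = ∑' i : {i : ℕ // Q i ∈ T}, (2 : ℝ) ^ (-(f (i : ℕ) : ℤ))) :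
    S = T := by
  have hpow : ∀ n : ℕ, (2:ℝ) ^ (-(n:ℤ)) = gg n := by
    intro n
    rw [zpow_neg, zpow_natCast]
    unfold gg
    rw [inv_pow]
  have reindex : ∀ (A : Set ℕ),
      ∑' i : A, (2 : ℝ) ^ (-(f (i : ℕ) : ℤ)) = ∑' n : (f '' A), gg (n:ℕ) := by
    intro A
    rw [← Equiv.tsum_eq (Equiv.Set.image f A hf) (fun n : (f '' A) => gg (n:ℕ))]
    exact tsum_congr (fun i => by rw [hpow]; rfl)
  have h' : ∑' n : (f '' {i : ℕ | Q i ∈ S}), gg (n:ℕ)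
      = ∑' n : (f '' {i : ℕ | Q i ∈ T}), gg (n:ℕ) := by
    rw [← reindex, ← reindex]; exact h
  have hQS : {i : ℕ | Q i ∈ S} = Q ⁻¹' S := rfl
  have hQT : {i : ℕ | Q i ∈ T} = Q ⁻¹' T := rfl
  have hASinf : (f '' {i : ℕ | Q i ∈ S}).Infinite ∨ f '' {i : ℕ | Q i ∈ S} = ∅ := by
    rcases hS with hSi | hSe
    · exact Or.inl ((hSi.preimage (fun x _ => Q.surjective x)).image
        (Set.injOn_of_injective hf))
    · right; rw [hQS, hSe]; simp
  have hATinf : (f '' {i : ℕ | Q i ∈ T}).Infinite ∨ f '' {i : ℕ | Q i ∈ T} = ∅ := by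
    rcases hT with hTi | hTe
    · exact Or.inl ((hTi.preimage (fun x _ => Q.surjective x)).image
        (Set.injOn_of_injective hf))
    · right; rw [hQT, hTe]; simp
  have himg := key2 _ _ hASinf hATinf h'
  have hA : Q ⁻¹' S = Q ⁻¹' T := Set.image_injective.mpr hf himg
  have := congrArg (Set.image Q) hA
  rwa [Q.image_preimage, Q.image_preimage] at this
end

section
/- Let Ω be a set with card(Ω) = 𝔠, and let S be a subset of (0,∞) with card(S) = 𝔠. Then there exists a strongly rigid S-semi-metric r on Ω. -/
/-!
Since `#(Ω × Ω) = 𝔠 * 𝔠 = 𝔠`, the unordered pairs `Sym2 Ω` inject into `S`. Sending each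
pair of distinct points to its image under such an injection gives a semi-metric with values
in `S` whose nonzero values determine the pair, i.e. a strongly rigid one.
-/

open Cardinal

theorem Cardinal.mk_sym2_le_mul_self {α : Type*} : #(Sym2 α) ≤ #α * #α := by
  rw [mul_def]
  exact mk_le_of_surjective Sym2.mk_surjective

namespace Sym2

variable {Ω : Type*} [DecidableEq Ω]

def semiMetricOf (g : Sym2 Ω → ℝ) (x y : Ω) : ℝ :=
  if x = y then 0 else g s(x, y)

variable (g : Sym2 Ω → ℝ)

theorem semiMetricOf_comm (x y : Ω) : semiMetricOf g x y = semiMetricOf g y x := by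
  by_cases h : x = y
  · simp [semiMetricOf, h]
  · simp [semiMetricOf, h, Ne.symm h, Sym2.eq_swap]

theorem semiMetricOf_of_ne {x y : Ω} (h : x ≠ y) : semiMetricOf g x y = g s(x, y) :=
  if_neg h

theorem semiMetricOf_eq_zero_iff (hg : ∀ z, 0 < g z) (x y : Ω) :
    semiMetricOf g x y = 0 ↔ x = y := by
  by_cases h : x = y
  · simp [semiMetricOf, h]
  · simp [semiMetricOf_of_ne g h, h, (hg _).ne']

theorem semiMetricOf_strongly_rigid (hg : Function.Injective g) {x y u v : Ω}
    (heq : semiMetricOf g x y = semiMetricOf g u v) (hne : semiMetricOf g x y ≠ 0) :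
    ({x, y} : Set Ω) = {u, v} := by
  have hxy : x ≠ y := by rintro rfl; simp [semiMetricOf] at hne
  have huv : u ≠ v := by rintro rfl; rw [heq] at hne; simp [semiMetricOf] at hne
  rw [semiMetricOf_of_ne g hxy, semiMetricOf_of_ne g huv] at heq
  exact Set.pair_eq_pair_iff.mpr (Sym2.eq_iff.mp (hg heq))

end Sym2

/-- If `card Ω = 𝔠` and `S ⊆ (0,∞)` has `card S = 𝔠`, then there exists
a strongly rigid `S`-semi-metric on `Ω`. -/
theorem stmt5 {Ω : Type*} (hΩ : Cardinal.mk Ω = Cardinal.continuum)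
    (S : Set ℝ) (hSsub : S ⊆ Set.Ioi 0) (hScard : Cardinal.mk ↥S = Cardinal.continuum) :
    ∃ r : Ω → Ω → ℝ,
      (∀ x y, r x y = r y x) ∧
      (∀ x y, r x y = 0 ↔ x = y) ∧
      (∀ x y, x ≠ y → r x y ∈ S) ∧
      (∀ x y u v : Ω, r x y = r u v → r x y ≠ 0 →
        ({x, y} : Set Ω) = ({u, v} : Set Ω)) := by
  classical
  obtain ⟨e⟩ : Nonempty (Sym2 Ω ↪ S) := by
    rw [← lift_mk_le', hScard, lift_continuum, ← lift_continuum.{0}, lift_le, ← continuum_mul_self,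
      ← hΩ]
    exact mk_sym2_le_mul_self
  let g : Sym2 Ω → ℝ := fun z => e z
  refine ⟨Sym2.semiMetricOf g, Sym2.semiMetricOf_comm g,
    Sym2.semiMetricOf_eq_zero_iff g fun z => hSsub (e z).2, fun x y h => ?_,
    fun x y u v => Sym2.semiMetricOf_strongly_rigid g (Subtype.val_injective.comp e.injective)⟩
  rw [Sym2.semiMetricOf_of_ne g h]
  exact (e s(x, y)).2
end

section
/- Let Ω be a discrete topological space with card(Ω) = 𝔠, let N(Ω) = Ω^ℕ be the countable power of Ω equipped with the product topology, and let k ∈ ℕ. Then there exists a metric ρ on N(Ω) inducing the product topology such that: (1) ρ is complete; (2) the diameter of N(Ω) with respect to ρ is at most 2^{−k}; and (3) ρ is strongly rigid. -/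
/-- A metric is complete if every Cauchy sequence converges (with respect to it). -/
def CompleteM {X : Type*} [TopologicalSpace X] (d : MetricOn X) : Prop :=
  ∀ u : ℕ → X,
    (∀ ε > (0:ℝ), ∃ N, ∀ m ≥ N, ∀ n ≥ N, d.toFun (u m) (u n) < ε) →
    ∃ a : X, ∀ ε > (0:ℝ), ∃ N, ∀ n ≥ N, d.toFun (u n) a < ε

/-!
The metric is `ρ(x, y) = ∑ᵢ θᵢ(x|i, y|i)`, where `x|i` is the restriction of `x` to its first `i`
coordinates. Each `θᵢ` vanishes on the diagonal and takes values in `[Lᵢ, 2Lᵢ]` off it, so it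
satisfies the triangle inequality, and `Lᵢ → 0` fast enough for `ρ` to induce the product
topology and to be complete. Off the diagonal, `θᵢ(a, b)` is a base-`4` number with digits in
`{0, 1}`: a leading `1` followed by an injective binary code of the unordered pair `{a, b}`, which
exists because there are only `𝔠` such pairs. Different levels use disjoint digit positions, so by
uniqueness of such expansions `ρ(x, y)` determines every pair `{x|i, y|i}`, and these determine
`{x, y}`. Scaling by `2⁻ᵏ` gives the bound on the diameter.
-/

open Cardinal PiNat Function

section CantorFunction

variable {c : ℝ} {f : ℕ → Bool}

theorem pow_le_cantorFunction (h0 : 0 ≤ c) (h1 : c < 1) {n : ℕ} (hn : f n = true) :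
    c ^ n ≤ cantorFunction c f := by
  rw [← cantorFunctionAux_true hn]
  exact (summable_cantor_function f h0 h1).le_tsum n fun m _ => cantorFunctionAux_nonneg h0

theorem cantorFunction_le_of_forall_le_eq_false (h0 : 0 ≤ c) (h1 : c < 1) {N : ℕ}
    (hf : ∀ n ≤ N, f n = false) : cantorFunction c f ≤ c ^ (N + 1) / (1 - c) := by
  have hs := summable_cantor_function f h0 h1
  rw [cantorFunction, ← hs.sum_add_tsum_nat_add (N + 1),
    Finset.sum_eq_zero fun n hn => cantorFunctionAux_false (hf n (Finset.mem_range_succ_iff.1 hn)),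
    zero_add, div_eq_mul_inv, ← tsum_geometric_of_lt_one h0 h1, ← tsum_mul_left]
  refine (hs.comp_injective (add_left_injective _)).tsum_le_tsum (fun n => ?_)
    ((summable_geometric_of_lt_one h0 h1).mul_left _)
  rw [cantorFunctionAux, ← pow_add, add_comm (N + 1) n]
  cases f (n + (N + 1)) <;> simp [pow_nonneg h0]

theorem hasSum_tsum_cantorFunctionAux_pair (h0 : 0 ≤ c) (h1 : c < 1) (f : ℕ → Bool) :
    HasSum (fun i => ∑' m, cantorFunctionAux c f (Nat.pair i m)) (cantorFunction c f) := by
  have hs := (Nat.pairEquiv.summable_iff (f := cantorFunctionAux c f)).2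
    (summable_cantor_function f h0 h1)
  rw [cantorFunction, ← Nat.pairEquiv.tsum_eq]
  exact hs.tsum_prod ▸ hs.prod.hasSum

end CantorFunction

theorem triangle_of_forall_ne_mem_Icc {β : Type*} {δ : β → β → ℝ} {L : ℝ}
    (hself : ∀ a, δ a a = 0) (hne : ∀ a b, a ≠ b → δ a b ∈ Set.Icc L (2 * L)) (a b c : β) :
    δ a c ≤ δ a b + δ b c := by
  rcases eq_or_ne a b with rfl | hab
  · rw [hself, zero_add]
  rcases eq_or_ne b c with rfl | hbc
  · rw [hself, add_zero]
  have h₁ := hne a b hab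
  have h₂ := hne b c hbc
  rcases eq_or_ne a c with rfl | hac
  · rw [hself]; linarith [h₁.1, h₁.2, h₂.1]
  linarith [(hne a c hac).2, h₁.1, h₂.1]

section Res

variable {α : Type*} {x y u v : ℕ → α}

theorem res_eq_res_of_le {i j : ℕ} (h : res x j = res y j) (hij : i ≤ j) : res x i = res y i :=
  res_eq_res.2 fun _ hm => res_eq_res.1 h (hm.trans_le hij)

theorem res_ne_res_of_lt {n i : ℕ} (hn : x n ≠ y n) (hi : n < i) : res x i ≠ res y i :=
  fun h => hn (res_eq_res.1 h hi)

theorem eq_of_forall_gt_res_eq {n : ℕ} (h : ∀ i > n, res x i = res y i) : x = y :=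
  funext fun m => res_eq_res.1 (h (m + n + 1) (by omega)) (by omega)

theorem sym2_eq_of_forall_gt_sym2_res_eq {n : ℕ} (hn : x n ≠ y n)
    (h : ∀ i > n, s(res x i, res y i) = s(res u i, res v i)) : s(x, y) = s(u, v) := by
  have hne : res x (n + 1) ≠ res y (n + 1) := res_ne_res_of_lt hn (lt_add_one n)
  -- the orientation at level `n + 1` propagates upwards: a flip at a later level `i` would
  -- restrict to `x|(n+1) = y|(n+1)`
  have oriented : ∀ {u v : ℕ → α}, (∀ i > n, s(res x i, res y i) = s(res u i, res v i)) →
      res x (n + 1) = res u (n + 1) → x = u ∧ y = v := by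
    intro u v h hxu
    have hlevel : ∀ i > n, res x i = res u i ∧ res y i = res v i := fun i hi =>
      (Sym2.eq_iff.1 (h i hi)).resolve_right fun ⟨_, hyu⟩ =>
        hne (hxu.trans (res_eq_res_of_le hyu.symm hi))
    exact ⟨eq_of_forall_gt_res_eq fun i hi => (hlevel i hi).1,
      eq_of_forall_gt_res_eq fun i hi => (hlevel i hi).2⟩
  rcases Sym2.eq_iff.1 (h (n + 1) (lt_add_one n)) with ⟨hxu, -⟩ | ⟨hxv, -⟩
  · obtain ⟨rfl, rfl⟩ := oriented h hxu
    rfl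
  · obtain ⟨rfl, rfl⟩ := oriented (fun i hi => (h i hi).trans Sym2.eq_swap) hxv
    exact Sym2.eq_swap

end Res

section PrefixDist

variable {α : Type*} [TopologicalSpace α]

theorem isOpen_iff_of_res [DiscreteTopology α] {d : (ℕ → α) → (ℕ → α) → ℝ}
    (hsmall : ∀ ε > 0, ∃ N, ∀ x y, res x N = res y N → d x y < ε)
    (hlarge : ∀ N, ∃ δ > 0, ∀ x y, d x y < δ → res x N = res y N) (s : Set (ℕ → α)) :
    IsOpen s ↔ ∀ x ∈ s, ∃ ε > 0, ∀ y, d x y < ε → y ∈ s := by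
  constructor
  · intro hs x hx
    obtain ⟨_, ⟨z, N, rfl⟩, hxz, hzs⟩ :=
      (isTopologicalBasis_cylinders _).exists_subset_of_mem_open hx hs
    rw [← mem_cylinder_iff_eq.1 hxz, cylinder_eq_res] at hzs
    obtain ⟨δ, hδ, hd⟩ := hlarge N
    exact ⟨δ, hδ, fun y hy => hzs (hd x y hy).symm⟩
  · intro h
    refine (isTopologicalBasis_cylinders _).isOpen_iff.2 fun x hx => ?_
    obtain ⟨ε, hε, hs⟩ := h x hx
    obtain ⟨N, hN⟩ := hsmall ε hε
    refine ⟨cylinder x N, ⟨x, N, rfl⟩, self_mem_cylinder x N, fun y hy => hs y (hN x y ?_)⟩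
    rw [cylinder_eq_res] at hy
    exact hy.symm

theorem completeM_of_res (d : MetricOn (ℕ → α))
    (hsmall : ∀ ε > 0, ∃ N, ∀ x y, res x N = res y N → d.toFun x y < ε)
    (hlarge : ∀ N, ∃ δ > 0, ∀ x y, d.toFun x y < δ → res x N = res y N) : CompleteM d := by
  intro u hu
  have hstable : ∀ N, ∃ M, ∀ m ≥ M, ∀ n ≥ M, res (u m) N = res (u n) N := fun N => by
    obtain ⟨δ, hδ, hd⟩ := hlarge N
    obtain ⟨M, hM⟩ := hu δ hδ
    exact ⟨M, fun m hm n hn => hd _ _ (hM m hm n hn)⟩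
  choose M hM using hstable
  refine ⟨fun i => u (M (i + 1)) i, fun ε hε => ?_⟩
  obtain ⟨N, hN⟩ := hsmall ε hε
  refine ⟨(Finset.range (N + 1)).sup M, fun n hn => hN _ _ (res_eq_res.2 fun i hi => ?_)⟩
  have hle : M (i + 1) ≤ n :=
    (Finset.le_sup (Finset.mem_range.2 (by omega))).trans hn
  exact res_eq_res.1 (hM (i + 1) n hle _ le_rfl) (lt_add_one i)

end PrefixDist

namespace RigidMetric

noncomputable section

variable {α : Type*} [DecidableEq α] (J : Sym2 (List α) → ℕ → Bool)

def pairCode (z : Sym2 (List α)) : ℕ → Bool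
  | 0 => true
  | m + 1 => J z m

def levelDigits (a b : List α) (m : ℕ) : Bool :=
  decide (a ≠ b) && pairCode J s(a, b) m

/-- Level `i` occupies the base-`4` digits of `dist J x y` at the positions `Nat.pair i m`. -/
def digits (x y : ℕ → α) (n : ℕ) : Bool :=
  levelDigits J (res x n.unpair.1) (res y n.unpair.1) n.unpair.2

def dist (x y : ℕ → α) : ℝ :=
  cantorFunction 4⁻¹ (digits J x y)

def levelDist (i : ℕ) (a b : List α) : ℝ :=
  ∑' m, cond (levelDigits J a b m) (4⁻¹ ^ Nat.pair i m) 0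

variable {J}

theorem levelDigits_comm (a b : List α) (m : ℕ) : levelDigits J a b m = levelDigits J b a m := by
  simp only [levelDigits, ne_comm, Sym2.eq_swap]

theorem levelDigits_self (a : List α) (m : ℕ) : levelDigits J a a m = false := by
  simp [levelDigits]

theorem levelDist_self (i : ℕ) (a : List α) : levelDist J i a a = 0 := by
  simp [levelDist, levelDigits_self]

theorem levelDist_mem_Icc {i : ℕ} {a b : List α} (hab : a ≠ b) :
    levelDist J i a b ∈ Set.Icc (4⁻¹ ^ Nat.pair i 0) (2 * 4⁻¹ ^ Nat.pair i 0) := by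
  have hterm : ∀ m, cond (levelDigits J a b m) ((4 : ℝ)⁻¹ ^ Nat.pair i m) 0 ≤
      4⁻¹ ^ Nat.pair i 0 * 4⁻¹ ^ m := fun m => by
    rw [← pow_add, add_comm]
    cases levelDigits J a b m
    · positivity
    · exact pow_le_pow_of_le_one (by norm_num) (by norm_num)
        (StrictMono.add_le_nat (fun _ _ => Nat.pair_lt_pair_right i) m 0)
  have hgeom : Summable fun m : ℕ => (4 : ℝ)⁻¹ ^ Nat.pair i 0 * 4⁻¹ ^ m :=
    (summable_geometric_of_lt_one (by norm_num) (by norm_num)).mul_left _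
  have hs : Summable fun m => cond (levelDigits J a b m) ((4 : ℝ)⁻¹ ^ Nat.pair i m) 0 :=
    .of_nonneg_of_le (fun m => by cases levelDigits J a b m <;> simp) hterm hgeom
  constructor
  · have h0 : levelDigits J a b 0 = true := by simp [levelDigits, pairCode, hab]
    simpa [levelDist, h0] using hs.le_tsum 0 fun m _ => by cases levelDigits J a b m <;> simp
  · calc levelDist J i a b ≤ ∑' m : ℕ, (4 : ℝ)⁻¹ ^ Nat.pair i 0 * 4⁻¹ ^ m :=
          hs.tsum_le_tsum hterm hgeom
      _ = 4 / 3 * 4⁻¹ ^ Nat.pair i 0 := by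
          rw [tsum_mul_left, tsum_geometric_of_lt_one (by norm_num) (by norm_num)]; ring
      _ ≤ 2 * 4⁻¹ ^ Nat.pair i 0 := by gcongr; norm_num

theorem levelDist_triangle (i : ℕ) (a b c : List α) :
    levelDist J i a c ≤ levelDist J i a b + levelDist J i b c :=
  triangle_of_forall_ne_mem_Icc (levelDist_self i) (fun _ _ => levelDist_mem_Icc) a b c

variable {x y z u v : ℕ → α}

theorem hasSum_levelDist (x y : ℕ → α) :
    HasSum (fun i => levelDist J i (res x i) (res y i)) (dist J x y) := by
  rw [dist]
  convert hasSum_tsum_cantorFunctionAux_pair (c := 4⁻¹) (by norm_num) (by norm_num) (digits J x y)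
    using 3
  simp [levelDist, cantorFunctionAux, digits]

theorem dist_comm (x y : ℕ → α) : dist J x y = dist J y x :=
  congrArg (cantorFunction 4⁻¹) (funext fun _ => levelDigits_comm _ _ _)

theorem dist_self (x : ℕ → α) : dist J x x = 0 := by
  simp [dist, digits, levelDigits_self, cantorFunction, cantorFunctionAux]

theorem dist_triangle (x y z : ℕ → α) : dist J x z ≤ dist J x y + dist J y z :=
  hasSum_le (fun i => levelDist_triangle i _ _ _) (hasSum_levelDist x z)
    ((hasSum_levelDist x y).add (hasSum_levelDist y z))

theorem pow_le_dist {i : ℕ} (h : res x i ≠ res y i) : 4⁻¹ ^ Nat.pair i 0 ≤ dist J x y :=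
  pow_le_cantorFunction (by norm_num) (by norm_num) (by simp [digits, levelDigits, pairCode, h])

theorem dist_le_of_res_eq {N : ℕ} (h : res x N = res y N) : dist J x y ≤ 4⁻¹ ^ N / 3 := by
  have hdigits : ∀ n ≤ N, digits J x y n = false := fun n hn => by
    rw [digits, res_eq_res_of_le h ((Nat.unpair_left_le n).trans hn), levelDigits_self]
  rw [dist]
  convert cantorFunction_le_of_forall_le_eq_false (c := 4⁻¹) (by norm_num) (by norm_num) hdigits
    using 1
  rw [pow_succ]
  ring

theorem eq_of_dist_eq_zero (h : dist J x y = 0) : x = y := by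
  by_contra hxy
  obtain ⟨n, hn⟩ := Function.ne_iff.1 hxy
  have := pow_le_dist (J := J) (res_ne_res_of_lt hn (lt_add_one n))
  rw [h] at this
  exact (pow_pos (by norm_num) _).not_ge this

theorem exists_dist_lt_of_res_eq :
    ∀ ε > 0, ∃ N, ∀ x y : ℕ → α, res x N = res y N → dist J x y < ε := by
  intro ε hε
  obtain ⟨N, hN⟩ := exists_pow_lt_of_lt_one hε (by norm_num : (4 : ℝ)⁻¹ < 1)
  have : (0 : ℝ) ≤ 4⁻¹ ^ N := by positivity
  exact ⟨N, fun x y h => (dist_le_of_res_eq h).trans_lt (by linarith)⟩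

theorem exists_res_eq_of_dist_lt (N : ℕ) :
    ∃ δ > 0, ∀ x y : ℕ → α, dist J x y < δ → res x N = res y N :=
  ⟨4⁻¹ ^ Nat.pair N 0, by positivity, fun _ _ h => by_contra fun hne => (pow_le_dist hne).not_gt h⟩

theorem levelDigits_eq_of_dist_eq (h : dist J x y = dist J u v) (i m : ℕ) :
    levelDigits J (res x i) (res y i) m = levelDigits J (res u i) (res v i) m := by
  simpa [digits] using
    congrFun (cantorFunction_injective (by norm_num) (by norm_num) h) (Nat.pair i m)

theorem sym2_res_eq_of_dist_eq (hJ : Injective J) (h : dist J x y = dist J u v) {i : ℕ}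
    (hi : res x i ≠ res y i) : s(res x i, res y i) = s(res u i, res v i) := by
  have hd := levelDigits_eq_of_dist_eq h i
  have huv : res u i ≠ res v i := by simpa [levelDigits, pairCode, hi] using hd 0
  exact hJ (funext fun m => by simpa [levelDigits, pairCode, hi, huv] using hd (m + 1))

theorem dist_le_one (x y : ℕ → α) : dist J x y ≤ 1 :=
  le_trans (dist_le_of_res_eq (N := 0) rfl) (by norm_num)

variable [TopologicalSpace α] [DiscreteTopology α]

variable (J) in
def metric : MetricOn (ℕ → α) where
  toFun := dist J
  symm := dist_comm
  refl := dist_self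
  eq_of _ _ := eq_of_dist_eq_zero
  triangle := dist_triangle
  isOpen_iff := isOpen_iff_of_res exists_dist_lt_of_res_eq exists_res_eq_of_dist_lt

theorem completeM_metric : CompleteM (metric J) :=
  completeM_of_res _ exists_dist_lt_of_res_eq exists_res_eq_of_dist_lt

theorem stronglyRigid_metric (hJ : Injective J) : StronglyRigid (metric J) := by
  intro x y u v h h0
  obtain ⟨n, hn⟩ := Function.ne_iff.1 fun hxy : x = y => h0 (hxy ▸ dist_self y)
  have := sym2_eq_of_forall_gt_sym2_res_eq hn fun i hi =>
    sym2_res_eq_of_dist_eq hJ h (res_ne_res_of_lt hn hi)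
  rcases Sym2.eq_iff.1 this with ⟨rfl, rfl⟩ | ⟨rfl, rfl⟩
  · rfl
  · exact Set.pair_comm _ _

end

end RigidMetric

namespace MetricOn

variable {X : Type*} [TopologicalSpace X] (d : MetricOn X) {c : ℝ} (hc : 0 < c)

def scale : MetricOn X where
  toFun x y := c * d.toFun x y
  symm x y := by rw [d.symm]
  refl x := by rw [d.refl, mul_zero]
  eq_of x y h := d.eq_of x y ((mul_eq_zero.1 h).resolve_left hc.ne')
  triangle x y z := by
    rw [← mul_add]
    exact mul_le_mul_of_nonneg_left (d.triangle x y z) hc.le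
  isOpen_iff s := by
    rw [d.isOpen_iff]
    refine forall₂_congr fun x _ => ⟨fun ⟨ε, hε, h⟩ => ⟨c * ε, by positivity, fun y hy => ?_⟩,
      fun ⟨ε, hε, h⟩ => ⟨ε / c, by positivity, fun y hy => h y ?_⟩⟩
    · exact h y (lt_of_mul_lt_mul_left hy hc.le)
    · rwa [lt_div_iff₀' hc] at hy

variable {d}

theorem completeM_scale (hd : CompleteM d) : CompleteM (d.scale hc) := by
  intro u hu
  obtain ⟨a, ha⟩ := hd u fun ε hε => by
    simpa [scale, ← lt_div_iff₀' hc, mul_div_cancel_left₀ _ hc.ne'] using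
      hu (c * ε) (by positivity)
  refine ⟨a, fun ε hε => ?_⟩
  simpa [scale, lt_div_iff₀' hc] using ha (ε / c) (by positivity)

theorem stronglyRigid_scale (hd : StronglyRigid d) : StronglyRigid (d.scale hc) :=
  fun x y u v h h0 => hd x y u v (mul_left_cancel₀ hc.ne' h) (right_ne_zero_of_mul h0)

end MetricOn

theorem exists_injective_sym2_list {α : Type*} (hα : #α ≤ 𝔠) :
    ∃ J : Sym2 (List α) → ℕ → Bool, Injective J := by
  have hlist : #(List α) ≤ 𝔠 := (mk_list_le_max α).trans (max_le aleph0_le_continuum hα)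
  have hsym : #(Sym2 (List α)) ≤ 𝔠 :=
    calc #(Sym2 (List α)) ≤ #(List α × List α) := mk_le_of_surjective Sym2.mk_surjective
      _ ≤ 𝔠 * 𝔠 := by rw [mk_prod, lift_id]; exact mul_le_mul' hlist hlist
      _ = 𝔠 := continuum_mul_self
  obtain ⟨J⟩ :=
    lift_mk_le'.1 (by simpa using hsym : lift.{0} #(Sym2 (List α)) ≤ lift #(ℕ → Bool))
  exact ⟨J, J.injective⟩

/-- For a discrete space `Ω` of cardinality `𝔠` and `k ∈ ℕ`, the
countable power `Ω^ℕ` (with the product topology) carries a complete, strongly rigid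
metric inducing the product topology, of diameter at most `2^{-k}`. -/
theorem stmt7 {Ω : Type} [TopologicalSpace Ω] [DiscreteTopology Ω]
    (hΩ : Cardinal.mk Ω = Cardinal.continuum) (k : ℕ) :
    ∃ ρ : MetricOn (ℕ → Ω),
      CompleteM ρ ∧
      (∀ x y : ℕ → Ω, ρ.toFun x y ≤ (2 : ℝ) ^ (-(k : ℤ))) ∧
      StronglyRigid ρ := by
  classical
  obtain ⟨J, hJ⟩ := exists_injective_sym2_list hΩ.le
  have hc : (0 : ℝ) < 2 ^ (-(k : ℤ)) := by positivity
  refine ⟨(RigidMetric.metric J).scale hc,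
    MetricOn.completeM_scale hc RigidMetric.completeM_metric,
    fun x y => mul_le_of_le_one_right hc.le (RigidMetric.dist_le_one x y),
    MetricOn.stronglyRigid_scale hc (RigidMetric.stronglyRigid_metric hJ)⟩
end

section
/- Let Ω be a discrete topological space, and for each n ∈ ℕ let f_n : Ω^{n+1} → Ω be an injective map. Define Φ : Ω^ℕ → Ω^ℕ by letting, for x = (xᵢ)_{i∈ℕ}, the 2n-th coordinate of Φ(x) be x_n and the (2n+1)-st coordinate of Φ(x) be f_n(x₀, x₁, …, x_n). Then Φ is a topological embedding of Ω^ℕ into Ω^ℕ (both equipped with the product topology), and the image of Φ is closed in Ω^ℕ. -/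
/-- For a discrete space `Ω` and injective maps `f_n : Ω^{n+1} → Ω`, the
map `Φ : Ω^ℕ → Ω^ℕ` with `Φ(x)(2n) = x n` and `Φ(x)(2n+1) = f_n(x₀,…,x_n)` is a
topological embedding with closed image. -/
theorem stmt8 {Ω : Type*} [TopologicalSpace Ω] [DiscreteTopology Ω]
    (f : (n : ℕ) → (Fin (n + 1) → Ω) → Ω)
    (hf : ∀ n, Function.Injective (f n))
    (Φ : (ℕ → Ω) → (ℕ → Ω))
    (hΦeven : ∀ (x : ℕ → Ω) (n : ℕ), Φ x (2 * n) = x n)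
    (hΦodd : ∀ (x : ℕ → Ω) (n : ℕ), Φ x (2 * n + 1) = f n (fun j : Fin (n + 1) => x j)) :
    Topology.IsEmbedding Φ ∧ IsClosed (Set.range Φ) := by
  have hΦcont : Continuous Φ := by
    apply continuous_pi
    intro k
    rcases Nat.even_or_odd k with ⟨n, rfl⟩ | ⟨n, rfl⟩
    · have : (fun x : ℕ → Ω => Φ x (n + n)) = fun x => x n := by
        funext x; rw [← two_mul, hΦeven]
      rw [this]; exact continuous_apply n
    · have : (fun x : ℕ → Ω => Φ x (2 * n + 1)) =
          fun x => f n (fun j : Fin (n + 1) => x j) := by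
        funext x; rw [hΦodd]
      rw [this]
      exact continuous_of_discreteTopology.comp
        (continuous_pi fun j => continuous_apply (j : ℕ))
  have hΨ : Function.LeftInverse (fun y : ℕ → Ω => fun n => y (2 * n)) Φ := by
    intro x; funext n; exact hΦeven x n
  constructor
  · exact hΨ.isEmbedding (continuous_pi fun n => continuous_apply (2 * n)) hΦcont
  · have hrange : Set.range Φ =
        ⋂ n, {y : ℕ → Ω | y (2 * n + 1) = f n (fun j : Fin (n + 1) => y (2 * (j : ℕ)))} := by
      ext y
      simp only [Set.mem_range, Set.mem_iInter, Set.mem_setOf_eq]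
      constructor
      · rintro ⟨x, rfl⟩ n
        rw [hΦodd]
        congr 1
        funext j
        exact (hΦeven x j).symm
      · intro h
        refine ⟨fun n => y (2 * n), funext fun k => ?_⟩
        rcases Nat.even_or_odd k with ⟨n, rfl⟩ | ⟨n, rfl⟩
        · rw [← two_mul, hΦeven]
        · rw [hΦodd, h n]
    rw [hrange]
    exact isClosed_iInter fun n => isClosed_eq (continuous_apply _)
      (continuous_of_discreteTopology.comp
        (continuous_pi fun j => continuous_apply (2 * (j : ℕ))))
end

section
/- Let X be a strongly zero-dimensional metrizable topological space. Then card(X) ≤ 𝔠 if and only if there exists a strongly rigid metric d on X inducing the topology of X. -/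
/-- A space is strongly zero-dimensional if any two disjoint closed sets are separated
by a clopen set. -/
def StronglyZeroDim (X : Type*) [TopologicalSpace X] : Prop :=
  ∀ A B : Set X, IsClosed A → IsClosed B → A ∩ B = ∅ →
    ∃ V : Set X, IsClopen V ∧ A ⊆ V ∧ V ∩ B = ∅

/-!
A strongly zero-dimensional metric space has, for each `k`, a locally constant map `g k` moving
every point by less than `2⁻ᵏ`. For `x ≠ y` let `n` be the first level with `g n x ≠ g n y` and
put `d x y = 2⁻ⁿ + ε / 4`, where `ε = ∑ 4⁻ʲ` over the indices `j = ⟨k, i⟩` with `k ≥ n` such that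
bit `i` of a fixed injective code `Sym2 X → (ℕ → Bool)` (it exists as `#X ≤ 𝔠`) is set at the
unordered pair `s(g k x, g k y)`. As `ε ≤ 4/3 · 4⁻ⁿ`, `d` is within a factor `4/3` of the
ultrametric `2⁻ⁿ`, which gives the topology and, since the digits of `ε` below index `m` only
depend on the cells of level `< m`, the triangle inequality. The value of `d` determines `n`, then
every digit, hence the pairs `s(g k x, g k y)` for `k ≥ n`, hence `s(x, y)`.
Conversely, a strongly rigid metric makes `d x₀` injective into `ℝ`.
-/

open Set Function Filter Topology

namespace Cardinal

variable {c : ℝ}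

lemma cantorFunctionAux_le_pow (hc : 0 ≤ c) (f : ℕ → Bool) (n : ℕ) :
    cantorFunctionAux c f n ≤ c ^ n := by
  cases h : f n <;> simp [h, pow_nonneg hc]

lemma tsum_cantorFunctionAux_add_le (hc₀ : 0 ≤ c) (hc₁ : c < 1) (f : ℕ → Bool) (m : ℕ) :
    ∑' n, cantorFunctionAux c f (n + m) ≤ c ^ m / (1 - c) := by
  have hgeom : Summable fun n => c ^ n := summable_geometric_of_lt_one hc₀ hc₁
  calc ∑' n, cantorFunctionAux c f (n + m) ≤ ∑' n, c ^ n * c ^ m :=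
        ((summable_nat_add_iff m).2 (summable_cantor_function f hc₀ hc₁)).tsum_le_tsum
          (fun n => pow_add c n m ▸ cantorFunctionAux_le_pow hc₀ f (n + m)) (hgeom.mul_right _)
    _ = c ^ m / (1 - c) := by
        rw [tsum_mul_right, tsum_geometric_of_lt_one hc₀ hc₁, inv_mul_eq_div]

lemma abs_cantorFunction_sub_le (hc₀ : 0 ≤ c) (hc₁ : c < 1) {f g : ℕ → Bool} {m : ℕ}
    (h : ∀ n < m, f n = g n) :
    |cantorFunction c f - cantorFunction c g| ≤ c ^ m / (1 - c) := by
  rw [cantorFunction, cantorFunction,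
    ← (summable_cantor_function f hc₀ hc₁).sum_add_tsum_nat_add m,
    ← (summable_cantor_function g hc₀ hc₁).sum_add_tsum_nat_add m,
    Finset.sum_congr rfl fun n hn => cantorFunctionAux_eq (h n (Finset.mem_range.1 hn)),
    add_sub_add_left_eq_sub]
  exact abs_sub_le_of_nonneg_of_le (tsum_nonneg fun n => cantorFunctionAux_nonneg hc₀)
    (tsum_cantorFunctionAux_add_le hc₀ hc₁ f m) (tsum_nonneg fun n => cantorFunctionAux_nonneg hc₀)
    (tsum_cantorFunctionAux_add_le hc₀ hc₁ g m)

lemma cantorFunction_nonneg (hc : 0 ≤ c) (f : ℕ → Bool) : 0 ≤ cantorFunction c f :=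
  tsum_nonneg fun _ => cantorFunctionAux_nonneg hc

lemma cantorFunction_le_of_eq_false (hc₀ : 0 ≤ c) (hc₁ : c < 1) {f : ℕ → Bool} {m : ℕ}
    (h : ∀ n < m, f n = false) : cantorFunction c f ≤ c ^ m / (1 - c) := by
  have h0 : cantorFunction c (fun _ => false) = 0 := by simp [cantorFunction]
  simpa [h0, abs_of_nonneg (cantorFunction_nonneg hc₀ f)] using
    abs_cantorFunction_sub_le hc₀ hc₁ (g := fun _ => false) h

end Cardinal

section Topology

variable {X ι : Type*} [TopologicalSpace X]

lemma exists_isLocallyConstant_mem_of_locallyFinite [LinearOrder ι] [WellFoundedLT ι]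
    {W : ι → Set X} (hW : ∀ i, IsClopen (W i)) (hlf : LocallyFinite W) (hcov : ∀ x, ∃ i, x ∈ W i) :
    ∃ f : X → ι, IsLocallyConstant f ∧ ∀ x, x ∈ W (f x) := by
  have wf : WellFounded ((· < ·) : ι → ι → Prop) := wellFounded_lt
  let f : X → ι := fun x => wf.min {i | x ∈ W i} (hcov x)
  have hfW : ∀ x, x ∈ W (f x) := fun x => wf.min_mem _ (hcov x)
  have hf : ∀ x i, f x = i ↔ x ∈ W i ∧ ∀ j < i, x ∉ W j := fun x i => by
    refine ⟨fun h => h ▸ ⟨hfW x, fun j hj hx => wf.not_lt_min _ hx hj⟩,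
      fun ⟨hi, hmin⟩ => le_antisymm (wf.min_le hi) ?_⟩
    exact not_lt.1 fun hlt => hmin _ hlt (hfW x)
  refine ⟨f, IsLocallyConstant.iff_isOpen_fiber.2 fun i => ?_, hfW⟩
  have hfiber : f ⁻¹' {i} = W i \ ⋃ j : Iio i, W j := by
    ext x; simp [hf]
  rw [hfiber]
  exact (hW i).isOpen.sdiff <|
    (hlf.comp_injective Subtype.val_injective).isClosed_iUnion fun j => (hW j).isClosed

namespace StronglyZeroDim

lemma exists_isClopen_between (hX : StronglyZeroDim X) {A U : Set X} (hA : IsClosed A)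
    (hU : IsOpen U) (hAU : A ⊆ U) : ∃ V, IsClopen V ∧ A ⊆ V ∧ V ⊆ U := by
  obtain ⟨V, hV, hAV, hVU⟩ := hX A Uᶜ hA hU.isClosed_compl (by
    rwa [← disjoint_iff_inter_eq_empty, disjoint_compl_right_iff_subset])
  exact ⟨V, hV, hAV, by rwa [← disjoint_iff_inter_eq_empty, disjoint_compl_right_iff_subset] at hVU⟩

lemma normalSpace (hX : StronglyZeroDim X) : NormalSpace X where
  normal s t hs ht hst := by
    obtain ⟨V, hV, hsV, hVt⟩ :=
      hX.exists_isClopen_between hs ht.isOpen_compl (subset_compl_iff_disjoint_right.2 hst)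
    exact ⟨V, Vᶜ, hV.isOpen, hV.isClosed.isOpen_compl, hsV, subset_compl_comm.1 hVt,
      disjoint_compl_right⟩

lemma exists_isLocallyConstant_mem [ParacompactSpace X] (hX : StronglyZeroDim X)
    {u : ι → Set X} (hu : ∀ i, IsOpen (u i)) (hcov : ⋃ i, u i = univ) :
    ∃ f : X → ι, IsLocallyConstant f ∧ ∀ x, x ∈ u (f x) := by
  have := hX.normalSpace
  obtain ⟨v, hvo, hvcov, hvlf, hvu⟩ := precise_refinement u hu hcov
  obtain ⟨s, hscov, -, hsv⟩ := exists_iUnion_eq_closure_subset hvo (fun x => hvlf.point_finite x)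
    hvcov
  choose W hW hsW hWv using fun i =>
    hX.exists_isClopen_between isClosed_closure (hvo i) (hsv i)
  have hWcov : ∀ x, ∃ i, x ∈ W i := fun x => by
    obtain ⟨i, hi⟩ := mem_iUnion.1 (hscov.symm ▸ mem_univ x)
    exact ⟨i, hsW i (subset_closure hi)⟩
  let : LinearOrder ι := IsWellOrder.linearOrder WellOrderingRel
  have : WellFoundedLT ι := ⟨WellOrderingRel.isWellOrder.wf⟩
  obtain ⟨f, hf, hfW⟩ := exists_isLocallyConstant_mem_of_locallyFinite hW (hvlf.subset hWv) hWcov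
  exact ⟨f, hf, fun x => hvu _ (hWv _ (hfW x))⟩

lemma exists_isLocallyConstant_dist_lt {X : Type*} [MetricSpace X] (hX : StronglyZeroDim X)
    {r : ℝ} (hr : 0 < r) : ∃ g : X → X, IsLocallyConstant g ∧ ∀ x, dist (g x) x < r := by
  obtain ⟨g, hg, hgx⟩ := hX.exists_isLocallyConstant_mem (u := fun c => Metric.ball c r)
    (fun _ => Metric.isOpen_ball) (iUnion_eq_univ_iff.2 fun x => ⟨x, Metric.mem_ball_self hr⟩)
  exact ⟨g, hg, fun x => by simpa [dist_comm] using hgx x⟩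

end StronglyZeroDim

end Topology

open Cardinal

section RigidDist

variable {X α : Type*} (g : ℕ → X → α) (e : Sym2 α → ℕ → Bool)

-- `sInf ∅ = 0`: junk when `x` and `y` are never separated, e.g. when `x = y`.
noncomputable def sepLevel (x y : X) : ℕ := sInf {k | g k x ≠ g k y}

noncomputable def pairDigits (x y : X) (j : ℕ) : Bool :=
  decide (sepLevel g x y ≤ j.unpair.1) && e s(g j.unpair.1 x, g j.unpair.1 y) j.unpair.2

open Classical in
noncomputable def rigidDist (x y : X) : ℝ :=
  if x = y then 0 else
    (1 / 2) ^ sepLevel g x y + cantorFunction (1 / 4) (pairDigits g e x y) / 4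

variable {g e} {x y z u v : X} {j k : ℕ}

lemma sepLevel_comm (x y : X) : sepLevel g x y = sepLevel g y x := by
  simp only [sepLevel, ne_comm]

lemma eq_of_lt_sepLevel (h : k < sepLevel g x y) : g k x = g k y :=
  not_not.1 (Nat.notMem_of_lt_sInf h)

lemma sepLevel_spec (h : ∃ k, g k x ≠ g k y) : g (sepLevel g x y) x ≠ g (sepLevel g x y) y :=
  Nat.sInf_mem h

lemma lt_sepLevel_iff (h : ∃ k, g k x ≠ g k y) : k < sepLevel g x y ↔ ∀ j ≤ k, g j x = g j y :=
  ⟨fun hk _ hj => eq_of_lt_sepLevel (hj.trans_lt hk),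
    fun hk => not_le.1 fun hle => sepLevel_spec h (hk _ hle)⟩

lemma min_sepLevel_le (h : ∃ k, g k x ≠ g k z) :
    min (sepLevel g x y) (sepLevel g y z) ≤ sepLevel g x z :=
  not_lt.1 fun hlt => sepLevel_spec h <|
    (eq_of_lt_sepLevel (lt_min_iff.1 hlt).1).trans (eq_of_lt_sepLevel (lt_min_iff.1 hlt).2)

lemma pairDigits_comm (x y : X) : pairDigits g e x y = pairDigits g e y x := by
  ext j; rw [pairDigits, pairDigits, sepLevel_comm, Sym2.eq_swap]

lemma pairDigits_eq_false (h : j < sepLevel g x y) : pairDigits g e x y j = false := by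
  simp [pairDigits, (j.unpair_left_le).trans_lt h]

lemma rigidDist_self (x : X) : rigidDist g e x x = 0 := if_pos rfl

lemma rigidDist_of_ne (h : x ≠ y) : rigidDist g e x y =
    (1 / 2) ^ sepLevel g x y + cantorFunction (1 / 4) (pairDigits g e x y) / 4 :=
  if_neg h

lemma rigidDist_comm (x y : X) : rigidDist g e x y = rigidDist g e y x := by
  by_cases h : x = y
  · rw [h]
  · rw [rigidDist_of_ne h, rigidDist_of_ne (Ne.symm h), sepLevel_comm, pairDigits_comm]

lemma one_half_pow_le_of_lt {m n : ℕ} (h : m < n) : (1 / 2 : ℝ) ^ n ≤ (1 / 2) ^ m / 2 :=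
  calc (1 / 2 : ℝ) ^ n ≤ (1 / 2) ^ (m + 1) := pow_le_pow_of_le_one (by norm_num) (by norm_num) h
    _ = (1 / 2) ^ m / 2 := by ring

lemma one_quarter_pow_div_le (m : ℕ) : (1 / 4 : ℝ) ^ m / (1 - 1 / 4) ≤ 4 / 3 * (1 / 2) ^ m :=
  calc (1 / 4 : ℝ) ^ m / (1 - 1 / 4) = 4 / 3 * (1 / 4) ^ m := by ring
    _ ≤ 4 / 3 * (1 / 2) ^ m := by gcongr; norm_num

lemma pow_sepLevel_le_rigidDist (h : x ≠ y) : (1 / 2 : ℝ) ^ sepLevel g x y ≤ rigidDist g e x y := by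
  rw [rigidDist_of_ne h]
  linarith [cantorFunction_nonneg (by norm_num : (0 : ℝ) ≤ 1 / 4) (pairDigits g e x y)]

lemma rigidDist_le_pow_sepLevel (h : x ≠ y) :
    rigidDist g e x y ≤ 4 / 3 * (1 / 2 : ℝ) ^ sepLevel g x y := by
  have hdig : cantorFunction (1 / 4) (pairDigits g e x y) ≤ 4 / 3 * (1 / 2) ^ sepLevel g x y :=
    (cantorFunction_le_of_eq_false (by norm_num) (by norm_num) fun _ => pairDigits_eq_false).trans
      (one_quarter_pow_div_le _)
  rw [rigidDist_of_ne h]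
  linarith

lemma rigidDist_pos (h : x ≠ y) : 0 < rigidDist g e x y :=
  (pow_pos (by norm_num) _).trans_le (pow_sepLevel_le_rigidDist h)

lemma rigidDist_nonneg (x y : X) : 0 ≤ rigidDist g e x y := by
  by_cases h : x = y
  · rw [h, rigidDist_self]
  · exact (rigidDist_pos h).le

lemma rigidDist_triangle_of_sepLevel_le (hinj : Injective fun x k => g k x) (hxy : x ≠ y)
    (hyz : y ≠ z) (hxz : x ≠ z) (hle : sepLevel g x y ≤ sepLevel g y z) :
    rigidDist g e x z ≤ rigidDist g e x y + rigidDist g e y z := by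
  have hac : sepLevel g x y ≤ sepLevel g x z := by
    simpa [min_eq_left hle] using min_sepLevel_le (y := y) (ne_iff.1 (hinj.ne hxz))
  have hxy_ge := pow_sepLevel_le_rigidDist (g := g) (e := e) hxy
  have hyz_ge := pow_sepLevel_le_rigidDist (g := g) (e := e) hyz
  have hxz_le := rigidDist_le_pow_sepLevel (g := g) (e := e) hxz
  have hpos : (0 : ℝ) < (1 / 2) ^ sepLevel g x y := by positivity
  rcases hac.lt_or_eq with hac | hac
  · linarith [one_half_pow_le_of_lt hac, rigidDist_nonneg (g := g) (e := e) y z]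
  rcases hle.lt_or_eq with hab | hab
  · -- the digits of `(x, z)` and `(x, y)` are read off the same cells below level `sepLevel g y z`
    have hdig : ∀ j < sepLevel g y z, pairDigits g e x z j = pairDigits g e x y j := fun j hj => by
      rw [pairDigits, pairDigits, ← hac, eq_of_lt_sepLevel ((j.unpair_left_le).trans_lt hj)]
    have hclose := (abs_le.1 <| abs_cantorFunction_sub_le (by norm_num) (by norm_num) hdig).2.trans
      (one_quarter_pow_div_le _)
    rw [rigidDist_of_ne hxz, rigidDist_of_ne hxy, ← hac]
    linarith [pow_pos (by norm_num : (0 : ℝ) < 1 / 2) (sepLevel g y z)]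
  · rw [← hac] at hxz_le
    rw [← hab] at hyz_ge
    linarith

lemma rigidDist_triangle (hinj : Injective fun x k => g k x) (x y z : X) :
    rigidDist g e x z ≤ rigidDist g e x y + rigidDist g e y z := by
  by_cases hxz : x = z
  · rw [hxz, rigidDist_self]
    exact add_nonneg (rigidDist_nonneg _ _) (rigidDist_nonneg _ _)
  by_cases hxy : x = y
  · rw [hxy, rigidDist_self, zero_add]
  by_cases hyz : y = z
  · rw [hyz, rigidDist_self, add_zero]
  rcases le_total (sepLevel g x y) (sepLevel g y z) with hle | hle
  · exact rigidDist_triangle_of_sepLevel_le hinj hxy hyz hxz hle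
  · have := rigidDist_triangle_of_sepLevel_le (e := e) hinj (Ne.symm hyz) (Ne.symm hxy)
      (Ne.symm hxz) (by rwa [sepLevel_comm z y, sepLevel_comm y x])
    rw [rigidDist_comm z x, rigidDist_comm z y, rigidDist_comm y x] at this
    linarith

lemma rigidDist_lt_of_sepLevel_lt (hxy : x ≠ y) (huv : u ≠ v)
    (h : sepLevel g x y < sepLevel g u v) : rigidDist g e u v < rigidDist g e x y := by
  linarith [one_half_pow_le_of_lt h, rigidDist_le_pow_sepLevel (g := g) (e := e) huv,
    pow_sepLevel_le_rigidDist (g := g) (e := e) hxy,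
    pow_pos (by norm_num : (0 : ℝ) < 1 / 2) (sepLevel g x y)]

lemma sepLevel_eq_of_rigidDist_eq (hxy : x ≠ y) (huv : u ≠ v)
    (h : rigidDist g e x y = rigidDist g e u v) : sepLevel g x y = sepLevel g u v := by
  rcases lt_trichotomy (sepLevel g x y) (sepLevel g u v) with hlt | heq | hgt
  · exact absurd h (rigidDist_lt_of_sepLevel_lt hxy huv hlt).ne'
  · exact heq
  · exact absurd h (rigidDist_lt_of_sepLevel_lt huv hxy hgt).ne

lemma sym2_eq_of_pairDigits_eq (he : Injective e) (hl : sepLevel g x y = sepLevel g u v)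
    (h : pairDigits g e x y = pairDigits g e u v) (hk : sepLevel g x y ≤ k) :
    s(g k x, g k y) = s(g k u, g k v) :=
  he <| funext fun i => by simpa [pairDigits, hk, ← hl] using congrFun h (Nat.pair k i)

lemma sym2_eq_of_eventually_eq (hfreq : ∀ x y, (∃ᶠ k in atTop, g k x = g k y) → x = y)
    (h : ∀ᶠ k in atTop, s(g k x, g k y) = s(g k u, g k v)) : s(x, y) = s(u, v) := by
  simp only [Sym2.eq_iff] at h
  rcases frequently_or_distrib.1 h.frequently with h | h
  · rw [hfreq x u (h.mono fun _ => And.left), hfreq y v (h.mono fun _ => And.right)]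
  · rw [hfreq x v (h.mono fun _ => And.left), hfreq y u (h.mono fun _ => And.right), Sym2.eq_swap]

lemma sym2_eq_of_rigidDist_eq (hfreq : ∀ x y, (∃ᶠ k in atTop, g k x = g k y) → x = y)
    (he : Injective e) (h : rigidDist g e x y = rigidDist g e u v) (h0 : rigidDist g e x y ≠ 0) :
    s(x, y) = s(u, v) := by
  have hxy : x ≠ y := by rintro rfl; exact h0 (rigidDist_self x)
  have huv : u ≠ v := by rintro rfl; exact h0 (h.trans (rigidDist_self u))
  have hl := sepLevel_eq_of_rigidDist_eq hxy huv h
  have hdig : pairDigits g e x y = pairDigits g e u v := by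
    refine cantorFunction_injective (c := 1 / 4) (by norm_num) (by norm_num) ?_
    rw [rigidDist_of_ne hxy, rigidDist_of_ne huv, hl] at h
    linarith
  exact sym2_eq_of_eventually_eq hfreq <|
    eventually_atTop.2 ⟨_, fun k hk => sym2_eq_of_pairDigits_eq he hl hdig hk⟩

lemma rigidDist_lt_pow_iff (hinj : Injective fun x k => g k x) :
    rigidDist g e x y < (1 / 2) ^ k ↔ ∀ j ≤ k, g j x = g j y := by
  by_cases hxy : x = y
  · simp [hxy, rigidDist_self]
  rw [← lt_sepLevel_iff (ne_iff.1 (hinj.ne hxy))]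
  constructor
  · intro h
    exact (pow_lt_pow_iff_right_of_lt_one₀ (by norm_num) (by norm_num)).1
      ((pow_sepLevel_le_rigidDist hxy).trans_lt h)
  · intro h
    linarith [one_half_pow_le_of_lt h, rigidDist_le_pow_sepLevel (g := g) (e := e) hxy,
      pow_pos (by norm_num : (0 : ℝ) < 1 / 2) k]

end RigidDist

section Metric

variable {X : Type*} [MetricSpace X] {g : ℕ → X → X}

lemma dist_lt_of_apply_eq (hg : ∀ k x, dist (g k x) x < (1 / 2) ^ k) {k : ℕ} {x y : X}
    (h : g k x = g k y) : dist x y < 2 * (1 / 2) ^ k :=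
  calc dist x y ≤ dist (g k x) x + dist (g k x) y := dist_triangle_left _ _ _
    _ < (1 / 2) ^ k + (1 / 2) ^ k := add_lt_add (hg k x) (h ▸ hg k y)
    _ = 2 * (1 / 2) ^ k := by ring

lemma eq_of_frequently_apply_eq (hg : ∀ k x, dist (g k x) x < (1 / 2) ^ k) {x y : X}
    (h : ∃ᶠ k in atTop, g k x = g k y) : x = y := by
  by_contra hxy
  obtain ⟨K, hK⟩ := exists_pow_lt_of_lt_one (half_pos (dist_pos.2 hxy)) one_half_lt_one
  obtain ⟨k, hkK, hk⟩ := h.forall_exists_of_atTop K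
  have hKk : (1 / 2 : ℝ) ^ k ≤ (1 / 2) ^ K := pow_le_pow_of_le_one (by norm_num) (by norm_num) hkK
  linarith [dist_lt_of_apply_eq hg hk]

lemma injective_of_dist_apply_lt (hg : ∀ k x, dist (g k x) x < (1 / 2) ^ k) :
    Injective fun x k => g k x := fun _ _ h =>
  eq_of_frequently_apply_eq hg (Frequently.of_forall fun k => congrFun h k)

lemma hasBasis_rigidDist (hlc : ∀ k, IsLocallyConstant (g k))
    (hg : ∀ k x, dist (g k x) x < (1 / 2) ^ k) (e : Sym2 X → ℕ → Bool) (x : X) :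
    (𝓝 x).HasBasis (fun ε : ℝ => 0 < ε) fun ε => {y | rigidDist g e x y < ε} := by
  have hinj := injective_of_dist_apply_lt hg
  refine Metric.nhds_basis_ball.to_hasBasis (fun ε hε => ?_) (fun δ hδ => ?_)
  · obtain ⟨k, hk⟩ := exists_pow_lt_of_lt_one (half_pos hε) one_half_lt_one
    refine ⟨(1 / 2) ^ k, by positivity, fun y hy => ?_⟩
    have := dist_lt_of_apply_eq hg ((rigidDist_lt_pow_iff hinj).1 hy k le_rfl)
    rw [Metric.mem_ball, dist_comm]
    linarith
  · obtain ⟨k, hk⟩ := exists_pow_lt_of_lt_one hδ one_half_lt_one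
    have hcell : {y | ∀ j ≤ k, g j x = g j y} ∈ 𝓝 x :=
      (eventually_all_finite (finite_Iic k)).2 fun j _ =>
        ((hlc j).eventually_eq x).mono fun _ => Eq.symm
    obtain ⟨ε, hε, hball⟩ := Metric.mem_nhds_iff.1 hcell
    exact ⟨ε, hε, fun y hy => ((rigidDist_lt_pow_iff hinj).2 (hball hy)).trans hk⟩

end Metric

lemma isOpen_iff_of_hasBasis {X : Type*} [TopologicalSpace X] {d : X → X → ℝ}
    (h : ∀ x, (𝓝 x).HasBasis (fun ε : ℝ => 0 < ε) fun ε => {y | d x y < ε}) (s : Set X) :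
    IsOpen s ↔ ∀ x ∈ s, ∃ ε > 0, ∀ y, d x y < ε → y ∈ s := by
  simp [isOpen_iff_mem_nhds, (h _).mem_iff, subset_def]

lemma exists_injective_sym2_of_mk_le_continuum {X : Type*} (h : #X ≤ 𝔠) :
    ∃ e : Sym2 X → ℕ → Bool, Injective e := by
  have hsym : #(Sym2 X) ≤ 𝔠 :=
    calc #(Sym2 X) ≤ #(X × X) := mk_quot_le
      _ = #X * #X := by simp
      _ ≤ 𝔠 * 𝔠 := mul_le_mul' h h
      _ = 𝔠 := continuum_mul_self
  obtain ⟨e⟩ := (lift_mk_le' (α := Sym2 X) (β := ℕ → Bool)).1 (by simpa using hsym)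
  exact ⟨e, e.injective⟩

lemma mk_le_continuum_of_stronglyRigid {X : Type*} [TopologicalSpace X] {d : MetricOn X}
    (hd : StronglyRigid d) : #X ≤ 𝔠 := by
  rcases isEmpty_or_nonempty X with hX | ⟨⟨x₀⟩⟩
  · simp
  have hinj : Injective (d.toFun x₀) := fun a b hab => by
    by_cases h0 : d.toFun x₀ a = 0
    · exact (d.eq_of _ _ h0).symm.trans (d.eq_of _ _ (hab ▸ h0))
    · rcases Set.pair_eq_pair_iff.1 (hd x₀ a x₀ b hab h0) with ⟨-, h⟩ | ⟨h, h'⟩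
      · exact h
      · exact h'.trans h
  simpa [mk_real] using lift_mk_le_lift_mk_of_injective hinj

theorem StronglyZeroDim.exists_stronglyRigid {X : Type*} [MetricSpace X] (hX : StronglyZeroDim X)
    (hcard : #X ≤ 𝔠) : ∃ d : MetricOn X, StronglyRigid d := by
  choose g hlc hg using fun k : ℕ =>
    hX.exists_isLocallyConstant_dist_lt (pow_pos (by norm_num : (0 : ℝ) < 1 / 2) k)
  obtain ⟨e, he⟩ := exists_injective_sym2_of_mk_le_continuum hcard
  refine ⟨⟨rigidDist g e, rigidDist_comm, rigidDist_self,
    fun x y h => by_contra fun hxy => (rigidDist_pos hxy).ne' h,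
    rigidDist_triangle (injective_of_dist_apply_lt hg),
    isOpen_iff_of_hasBasis (hasBasis_rigidDist hlc hg e)⟩, fun x y u v h h0 => ?_⟩
  rw [Set.pair_eq_pair_iff, ← Sym2.eq_iff]
  exact sym2_eq_of_rigidDist_eq (fun _ _ => eq_of_frequently_apply_eq hg) he h h0

/-- A strongly zero-dimensional metrizable space `X` satisfies
`card X ≤ 𝔠` iff it admits a strongly rigid metric inducing its topology. -/
theorem stmt11 {X : Type} [TopologicalSpace X] [TopologicalSpace.MetrizableSpace X]
    (hX : StronglyZeroDim X) :
    Cardinal.mk X ≤ Cardinal.continuum ↔ ∃ d : MetricOn X, StronglyRigid d := by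
  let := TopologicalSpace.metrizableSpaceMetric X
  exact ⟨hX.exists_stronglyRigid, fun ⟨_, hd⟩ => mk_le_continuum_of_stronglyRigid hd⟩
end
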